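/- arXiv:1610.04819 — 5 statements merged into one kernel-verified Lean document; each statement's English description precedes it below -/
import Mathlib

section
/- Let μ ∈ Xf be n-deep in C₀ and s ∈ Wf. Then the set {λ ∈ X₁ : (w, λ + η) ∼ (s, μ + η) for some w ∈ Wf}, taken modulo the equivalence λ ≡ λ′ iff λ − λ′ ∈ (p − π)X⁰ := {pξ − πξ : ξ ∈ X⁰}, has exactly (n!)^f elements. (Equivalently, the set of obvious Serre weights of a tame Galois representation with n-deep lowest alcove presentation (s, μ) has cardinality (n!)^f, via a bijection with Wf.) -/
/-!
Common setup: the extended affine Weyl group of `GL_n` (f-fold product), its dot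
action on `(ℝ^n)^f`, p-alcoves, lengths, Bruhat orders (dominant and antidominant),
the up (↑) order, admissible sets, and the combinatorics of lowest alcove
presentations, following Le–Le Hung–Levin, "Weight elimination in Serre-type
conjectures".
-/

noncomputable section

namespace LLLSerre

open scoped BigOperators

/-- `η₀ = (n-1, n-2, …, 1, 0)`. -/
def eta0 (n : ℕ) : Fin n → ℤ := fun i => (n : ℤ) - 1 - (i : ℤ)

/-- The action of a permutation on a vector: `(σ x) i = x (σ⁻¹ i)`. -/
def permAct {n : ℕ} {α : Type*} (σ : Equiv.Perm (Fin n)) (x : Fin n → α) : Fin n → α :=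
  fun i => x (σ⁻¹ i)

/-- The weight lattice `Xf = (ℤ^n)^f`. -/
abbrev Xf (n f : ℕ) := Fin f → Fin n → ℤ

/-- The f-fold product of Weyl groups `Wf = (S_n)^f`. -/
abbrev WfG (n f : ℕ) := Fin f → Equiv.Perm (Fin n)

/-- Points of `(ℝ^n)^f`. -/
abbrev RPt (n f : ℕ) := Fin f → Fin n → ℝ

/-- The extended affine Weyl group `Wtf = (X ⋊ W)^f`; the pair `(w, ν)` represents
`w t_ν`. -/
structure Wtf (n f : ℕ) where
  w : WfG n f
  t : Xf n f

/-- Multiplication in `Wtf`: `(w₁ t_{ν₁})(w₂ t_{ν₂}) = w₁w₂ t_{ν₂ + w₂⁻¹(ν₁)}`. -/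
def Wtf.mul {n f : ℕ} (a b : Wtf n f) : Wtf n f :=
  ⟨fun j => a.w j * b.w j, fun j => b.t j + permAct (b.w j)⁻¹ (a.t j)⟩

/-- Inversion in `Wtf`: `(w t_ν)⁻¹ = w⁻¹ t_{-w(ν)}`. -/
def Wtf.inv {n f : ℕ} (a : Wtf n f) : Wtf n f :=
  ⟨fun j => (a.w j)⁻¹, fun j => -(permAct (a.w j) (a.t j))⟩

/-- Embedding of the finite Weyl group `Wf` in `Wtf`. -/
def ofW {n f : ℕ} (w : WfG n f) : Wtf n f := ⟨w, fun _ _ => 0⟩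

/-- The translation `t_ν ∈ Wtf`. -/
def transl {n f : ℕ} (ν : Xf n f) : Wtf n f := ⟨fun _ => 1, ν⟩

/-- `η = (η₀, …, η₀) ∈ Xf`. -/
def etaf (n f : ℕ) : Xf n f := fun _ => eta0 n

/-- The longest element `w₀ ∈ Wf`. -/
def w0f (n f : ℕ) : WfG n f := fun _ => Fin.revPerm

/-- `w₀` as an element of `Wtf`. -/
def w0Elt (n f : ℕ) : Wtf n f := ofW (w0f n f)

/-- `w̃_h = w₀ t_{-η} ∈ Wtf`. -/
def whElt (n f : ℕ) : Wtf n f := ⟨w0f n f, fun _ i => -(eta0 n i)⟩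

/-- The dot action of `Wtf` on `(ℝ^n)^f`: `(w t_ν) · x = w(x + η + pν) − η`. -/
def dotR {n f : ℕ} (p : ℕ) (a : Wtf n f) (x : RPt n f) : RPt n f :=
  fun j i =>
    (x j ((a.w j)⁻¹ i) + ((eta0 n ((a.w j)⁻¹ i) : ℤ) : ℝ)
      + (p : ℝ) * ((a.t j ((a.w j)⁻¹ i) : ℤ) : ℝ)) - ((eta0 n i : ℤ) : ℝ)

/-- The dot action of `Wtf` on integral weights. -/
def dotZ {n f : ℕ} (p : ℕ) (a : Wtf n f) (lam : Xf n f) : Xf n f :=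
  fun j i =>
    (lam j ((a.w j)⁻¹ i) + eta0 n ((a.w j)⁻¹ i) + (p : ℤ) * a.t j ((a.w j)⁻¹ i)) - eta0 n i

/-- `⟨x_j + η₀, α_{ik}^∨⟩` for a real point `x`. -/
def prR {n f : ℕ} (x : RPt n f) (j : Fin f) (i k : Fin n) : ℝ :=
  (x j i + ((eta0 n i : ℤ) : ℝ)) - (x j k + ((eta0 n k : ℤ) : ℝ))

/-- `⟨λ_j + η₀, α_{ik}^∨⟩` for a weight `λ`. -/
def prZ {n f : ℕ} (lam : Xf n f) (j : Fin f) (i k : Fin n) : ℤ :=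
  (lam j i + eta0 n i) - (lam j k + eta0 n k)

/-- A point is (p-)regular if it lies on none of the affine hyperplanes
`⟨x_j + η₀, α^∨⟩ = pm`. -/
def regular {n f : ℕ} (p : ℕ) (x : RPt n f) : Prop :=
  ∀ (j : Fin f) (i k : Fin n) (m : ℤ), i < k → prR x j i k ≠ (p : ℝ) * (m : ℝ)

/-- Two regular points lie in the same p-alcove (same side of every hyperplane). -/
def sameAlcove {n f : ℕ} (p : ℕ) (x y : RPt n f) : Prop :=
  regular p x ∧ regular p y ∧
    ∀ (j : Fin f) (i k : Fin n) (m : ℤ), i < k →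
      (prR x j i k < (p : ℝ) * (m : ℝ) ↔ prR y j i k < (p : ℝ) * (m : ℝ))

/-- The root `α_{ik} = e_i - e_k` as a real vector. -/
def rootR {n : ℕ} (i k i' : Fin n) : ℝ :=
  (if i' = i then (1 : ℝ) else 0) - (if i' = k then (1 : ℝ) else 0)

/-- The affine reflection across the hyperplane `⟨x_j + η₀, α_{ik}^∨⟩ = pm`:
it replaces `x_j` by `x_j − (⟨x_j + η₀, α_{ik}^∨⟩ − pm) α_{ik}`. -/
def reflPt {n f : ℕ} (p : ℕ) (j : Fin f) (i k : Fin n) (m : ℤ) (x : RPt n f) : RPt n f :=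
  fun j' i' =>
    if j' = j then x j' i' - (prR x j i k - (p : ℝ) * (m : ℝ)) * rootR i k i' else x j' i'

/-- The origin, a point of the base alcove `C₀` (when `p > n`). -/
def basePt (n f : ℕ) : RPt n f := fun _ _ => 0

/-- The hyperplane indexed by `(j, i, k, m)` separates `x` from `y`. -/
def separates {n f : ℕ} (p : ℕ) (x y : RPt n f) (j : Fin f) (i k : Fin n) (m : ℤ) : Prop :=
  (prR x j i k < (p : ℝ) * (m : ℝ) ∧ (p : ℝ) * (m : ℝ) < prR y j i k) ∨
  (prR y j i k < (p : ℝ) * (m : ℝ) ∧ (p : ℝ) * (m : ℝ) < prR x j i k)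

/-- The length of `a ∈ Wtf` measured from the alcove of the base point `x`:
the number of hyperplanes separating the alcove of `x` from its image under `a`. -/
def lenFrom {n f : ℕ} (p : ℕ) (x : RPt n f) (a : Wtf n f) : ℕ :=
  Set.ncard {q : Fin f × Fin n × Fin n × ℤ |
    q.2.1 < q.2.2.1 ∧ separates p x (dotR p a x) q.1 q.2.1 q.2.2.1 q.2.2.2}

/-- Length relative to the dominant base alcove `C₀`. -/
def len {n f : ℕ} (p : ℕ) (a : Wtf n f) : ℕ := lenFrom p (basePt n f) a

/-- A point of the antidominant base alcove `w₀ · C₀`. -/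
def antiBasePt (n f p : ℕ) : RPt n f := dotR p (w0Elt n f) (basePt n f)

/-- Length relative to the antidominant base alcove `w₀ · C₀`. -/
def lenV {n f : ℕ} (p : ℕ) (a : Wtf n f) : ℕ := lenFrom p (antiBasePt n f p) a

/-- The affine Weyl group `Waf = (Λ_R ⋊ W)^f ⊆ Wtf`. -/
def Waf (n f : ℕ) : Set (Wtf n f) := {a | ∀ j, (∑ i, a.t j i) = 0}

/-- The stabilizer `Ωf` of the dominant base alcove `C₀`. -/
def Omegaf (n f p : ℕ) : Set (Wtf n f) :=
  {a | sameAlcove p (basePt n f) (dotR p a (basePt n f))}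

/-- The stabilizer of the antidominant base alcove `w₀ · C₀`. -/
def OmegaV (n f p : ℕ) : Set (Wtf n f) :=
  {a | sameAlcove p (antiBasePt n f p) (dotR p a (antiBasePt n f p))}

/-- `a ∈ Wtf` acts via the dot action as the affine reflection in a single hyperplane. -/
def isRefl {n f : ℕ} (p : ℕ) (a : Wtf n f) : Prop :=
  ∃ (j : Fin f) (i k : Fin n) (m : ℤ), i < k ∧ ∀ x, dotR p a x = reflPt p j i k m x

/-- One step of the Bruhat order (relative to the base point `x`):
`u < r u` for `r` a reflection with `ℓ(u) < ℓ(r u)`. -/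
def bruhatStepFrom {n f : ℕ} (p : ℕ) (x : RPt n f) (u v : Wtf n f) : Prop :=
  ∃ r, isRefl p r ∧ v = Wtf.mul r u ∧ lenFrom p x u < lenFrom p x v

/-- The Bruhat order on `Wtf` relative to the base alcove with representative
point `x` and stabilizer `Ω`: on `Waf` it is generated by the reflection steps,
and is extended to `Wtf` by `u ω ≤ v ω` for `u ≤ v` in `Waf`, `ω ∈ Ω`. -/
def bruhatLEFrom {n f : ℕ} (p : ℕ) (x : RPt n f) (Om : Set (Wtf n f)) (a b : Wtf n f) : Prop :=
  ∃ u v ω, u ∈ Waf n f ∧ v ∈ Waf n f ∧ ω ∈ Om ∧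
    a = Wtf.mul u ω ∧ b = Wtf.mul v ω ∧
    Relation.ReflTransGen (bruhatStepFrom p x) u v

/-- The Bruhat order on `Wtf` relative to the dominant base alcove. -/
def bruhatLE {n f : ℕ} (p : ℕ) (a b : Wtf n f) : Prop :=
  bruhatLEFrom p (basePt n f) (Omegaf n f p) a b

/-- The Bruhat order on `Wtf` relative to the antidominant base alcove. -/
def bruhatLEV {n f : ℕ} (p : ℕ) (a b : Wtf n f) : Prop :=
  bruhatLEFrom p (antiBasePt n f p) (OmegaV n f p) a b

/-- The admissible set `Adm(λ) = {w̃ : w̃ ≤ t_{σ(λ)} for some σ ∈ Wf}` (dominant order). -/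
def Adm {n f : ℕ} (p : ℕ) (lam : Xf n f) : Set (Wtf n f) :=
  {a | ∃ σ : WfG n f, bruhatLE p a (transl (fun j => permAct (σ j) (lam j)))}

/-- The admissible set `Adm∨(λ)` (antidominant order). -/
def AdmV {n f : ℕ} (p : ℕ) (lam : Xf n f) : Set (Wtf n f) :=
  {a | ∃ σ : WfG n f, bruhatLEV p a (transl (fun j => permAct (σ j) (lam j)))}

/-- The anti-automorphism `w̃ = w t_ν ↦ w̃* = t_{ν*} w*` of `Wtf`, where
`(w*)_j = (w_{f-1-j})⁻¹` and `(ν*)_j = ν_{f-1-j}`. -/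
def wstar {n f : ℕ} (a : Wtf n f) : Wtf n f :=
  ⟨fun j => (a.w (Fin.rev j))⁻¹, fun j => permAct (a.w (Fin.rev j)) (a.t (Fin.rev j))⟩

/-- `ν ↦ ν*` on weights: `(ν*)_j = ν_{f-1-j}`. -/
def xstar {n f : ℕ} (lam : Xf n f) : Xf n f := fun j => lam (Fin.rev j)

/-- The cyclic shift `π` on weights: `(πν)_j = ν_{j-1}`. -/
def sh {n f : ℕ} (ν : Xf n f) : Xf n f := fun j => ν ((finRotate f)⁻¹ j)

/-- The cyclic shift `π` on `Wf`: `(πσ)_j = σ_{j-1}`. -/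
def shW {n f : ℕ} (σ : WfG n f) : WfG n f := fun j => σ ((finRotate f)⁻¹ j)

/-- The `Wf`-part of `^(ν,σ)(w, μ)`, namely `σ w π(σ)⁻¹`. -/
def conjW {n f : ℕ} (σ w : WfG n f) : WfG n f := fun j => σ j * w j * (shW σ j)⁻¹

/-- The `Xf`-part of `^(ν,σ)(w, μ)`, namely `σ(μ) + pν − σwπ(σ)⁻¹ π(ν)`. -/
def conjX {n f : ℕ} (p : ℕ) (ν : Xf n f) (σ w : WfG n f) (μ : Xf n f) : Xf n f :=
  fun j i => permAct (σ j) (μ j) i + (p : ℤ) * ν j i - permAct (conjW σ w j) (sh ν j) i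

/-- `(w, μ) ∼ (w', μ')`: `(w', μ') = ^(ν,σ)(w, μ)` for some `(ν, σ)`. -/
def pairEquiv {n f : ℕ} (p : ℕ) (w : WfG n f) (μ : Xf n f) (w' : WfG n f) (μ' : Xf n f) : Prop :=
  ∃ (ν : Xf n f) (σ : WfG n f), w' = conjW σ w ∧ μ' = conjX p ν σ w μ

/-- `λ` is m-deep in the base alcove `C₀`:
`m < ⟨λ_j + η₀, α^∨⟩ < p − m` for all `j` and positive coroots `α^∨`. -/
def deep {n f : ℕ} (p m : ℕ) (lam : Xf n f) : Prop :=
  ∀ (j : Fin f) (i k : Fin n), i < k →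
    (m : ℤ) < prZ lam j i k ∧ prZ lam j i k < (p : ℤ) - (m : ℤ)

/-- `λ` lies m-deep in its own p-alcove. -/
def deepInAlcove {n f : ℕ} (p m : ℕ) (lam : Xf n f) : Prop :=
  ∀ (j : Fin f) (i k : Fin n), i < k →
    ∃ N : ℤ, (p : ℤ) * N + (m : ℤ) < prZ lam j i k ∧
      prZ lam j i k < (p : ℤ) * (N + 1) - (m : ℤ)

/-- The p-restricted weights `X₁`. -/
def X1 (n f p : ℕ) : Set (Xf n f) :=
  {lam | ∀ (j : Fin f) (i : Fin n) (h : (i : ℕ) + 1 < n),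
    0 ≤ lam j i - lam j ⟨(i : ℕ) + 1, h⟩ ∧ lam j i - lam j ⟨(i : ℕ) + 1, h⟩ ≤ (p : ℤ) - 1}

/-- `X⁰`: weights pairing to 0 with every coroot. -/
def X0 (n f : ℕ) : Set (Xf n f) := {lam | ∀ (j : Fin f) (i k : Fin n), lam j i = lam j k}

/-- The alcove of the regular point `x` is dominant. -/
def dominantPt {n f : ℕ} (x : RPt n f) : Prop :=
  ∀ (j : Fin f) (i k : Fin n), i < k → 0 < prR x j i k

/-- The alcove of the regular point `x` is p-restricted. -/
def restrictedPt {n f : ℕ} (p : ℕ) (x : RPt n f) : Prop :=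
  ∀ (j : Fin f) (i : Fin n) (h : (i : ℕ) + 1 < n),
    0 < prR x j i ⟨(i : ℕ) + 1, h⟩ ∧ prR x j i ⟨(i : ℕ) + 1, h⟩ < (p : ℝ)

/-- `Wtf⁺`: the elements sending `C₀` to a dominant alcove under the dot action. -/
def WtfPlus (n f p : ℕ) : Set (Wtf n f) := {a | dominantPt (dotR p a (basePt n f))}

/-- One step of the up (↑) order on alcoves, via representative points:
stay in the same alcove, or apply a reflection across a hyperplane lying above. -/
def upStep {n f : ℕ} (p : ℕ) (x y : RPt n f) : Prop :=
  sameAlcove p x y ∨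
    ∃ (j : Fin f) (i k : Fin n) (m : ℤ), i < k ∧ prR x j i k < (p : ℝ) * (m : ℝ) ∧
      y = reflPt p j i k m x

/-- The up (↑) order on p-alcoves, via representative points. -/
def alcoveLE {n f : ℕ} (p : ℕ) (x y : RPt n f) : Prop :=
  Relation.ReflTransGen (upStep p) x y

/-- `w̃₁ ↑ w̃₂` on `Wtf`: `w̃₁ · C₀ ↑ w̃₂ · C₀` and `w̃₁, w̃₂` in the same right
`Waf`-coset. -/
def upOrd {n f : ℕ} (p : ℕ) (a b : Wtf n f) : Prop :=
  alcoveLE p (dotR p a (basePt n f)) (dotR p b (basePt n f)) ∧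
    Wtf.mul a (Wtf.inv b) ∈ Waf n f

/-- Realification of an integral weight. -/
def toR {n f : ℕ} (lam : Xf n f) : RPt n f := fun j i => ((lam j i : ℤ) : ℝ)

/-- The `Wf`-orbit of a point of `(ℝ^n)^f`. -/
def orbitR {n f : ℕ} (y : RPt n f) : Set (RPt n f) :=
  Set.range fun σ : WfG n f => fun j => permAct (σ j) (y j)

end LLLSerre

/-!
Write `A = λ + η` and `B = μ + η`. A pair `(ν, σ)` exhibiting `(w, A) ∼ (s, B)` determines
`A = σ⁻¹(B − pν + s(πν))`. If `μ` is `n`-deep and `λ` is restricted, a maximum argument around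
the cycle `π` shows that every row of `ν` oscillates by at most `n − 1`, so the rows of
`B + s(πν)` decrease with gaps in `[2, p − 2]`. Restrictedness of `A` then forces `ν_j ∘ σ_j` to
go up by one exactly at the descents of `σ_j` and to stay put elsewhere, i.e. `ν` is a canonical
vector depending only on `σ` plus an element of `X⁰`. So every obvious weight is congruent modulo
`(p − π)X⁰` to the canonical weight of some `σ ∈ Wf`, each `σ` gives a restricted weight, and a
second maximum argument shows that canonical weights of different `σ` are not congruent.
-/

namespace LLLSerre

open Equiv

variable {n f : ℕ}

theorem sub_one_mul_le_of_forall_mul_le_add {ι : Type*} [Finite ι] (g : ι → ι) {x : ι → ℤ}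
    {p C : ℤ} (hp : 1 ≤ p) (h : ∀ j, p * x j ≤ x (g j) + C) (j : ι) : (p - 1) * x j ≤ C := by
  have : Nonempty ι := ⟨j⟩
  obtain ⟨j₀, hj₀⟩ := Finite.exists_max x
  calc (p - 1) * x j ≤ (p - 1) * x j₀ := mul_le_mul_of_nonneg_left (hj₀ j) (by omega)
    _ ≤ C := by linarith [h j₀, hj₀ (g j₀)]

theorem eq_zero_of_forall_abs_mul_sub_le {ι : Type*} [Finite ι] (g : ι → ι) {c : ι → ℤ} {p : ℤ}
    (h : ∀ j, |p * c j - c (g j)| ≤ p - 2) : c = 0 := by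
  funext j
  have hp : 2 ≤ p := by linarith [abs_nonneg (p * c j - c (g j)), h j]
  have hmul (j : ι) : p * |c j| ≤ |c (g j)| + (p - 2) :=
    calc p * |c j| = |p * c j - c (g j) + c (g j)| := by
          rw [sub_add_cancel, abs_mul, abs_of_nonneg (a := p) (by omega)]
      _ ≤ |c (g j)| + (p - 2) := by linarith [abs_add_le (p * c j - c (g j)) (c (g j)), h j]
  have := sub_one_mul_le_of_forall_mul_le_add g (by omega) hmul j
  exact Int.abs_lt_one_iff.mp (by nlinarith [abs_nonneg (c j)])

theorem eq_of_abs_mul_sub_mul_lt {p t k : ℤ} (h : |p * t - p * k| < p) : t = k := by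
  have hp : 0 < p := lt_of_le_of_lt (abs_nonneg _) h
  rw [← mul_sub, abs_mul, abs_of_pos hp] at h
  exact sub_eq_zero.mp (Int.abs_lt_one_iff.mp (by nlinarith [abs_nonneg (t - k)]))

def descents (σ : Perm (Fin n)) : ℕ → ℤ
  | 0 => 0
  | k + 1 => descents σ k +
      if h : k + 1 < n then (if σ ⟨k + 1, h⟩ < σ ⟨k, by omega⟩ then 1 else 0) else 0

theorem descents_succ (σ : Perm (Fin n)) {k : ℕ} (h : k + 1 < n) :
    descents σ (k + 1) = descents σ k + if σ ⟨k + 1, h⟩ < σ ⟨k, by omega⟩ then 1 else 0 := by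
  rw [descents, dif_pos h]

theorem descents_mem_Icc (σ : Perm (Fin n)) (k : ℕ) : descents σ k ∈ Set.Icc 0 (k : ℤ) := by
  induction k with
  | zero => simp [descents]
  | succ k ih =>
    simp only [descents, Set.mem_Icc] at ih ⊢
    split_ifs <;> push_cast <;> omega

section Row

variable {p m : ℕ}

def DeepRow (p m : ℕ) (b : Fin n → ℤ) : Prop :=
  ∀ x y, x < y → (m : ℤ) < b x - b y ∧ b x - b y < p - m

def RestrictedRow (p : ℕ) (a : Fin n → ℤ) : Prop :=
  ∀ (i : Fin n) (h : (i : ℕ) + 1 < n), 1 ≤ a i - a ⟨i + 1, h⟩ ∧ a i - a ⟨i + 1, h⟩ ≤ p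

theorem DeepRow.of_deep {μ : Xf n f} (hμ : deep p m μ) (j : Fin f) :
    DeepRow p m ((μ + etaf n f) j) :=
  hμ j

theorem DeepRow.sub_le {b : Fin n → ℤ} (hb : DeepRow p m b) (hmp : m < p) (x y : Fin n) :
    b x - b y ≤ p - m - 1 := by
  rcases lt_trichotomy x y with hxy | rfl | hxy
  · have := hb x y hxy; omega
  · omega
  · have := hb y x hxy; omega

theorem DeepRow.lt_abs_sub {b : Fin n → ℤ} (hb : DeepRow p m b) {x y : Fin n} (hxy : x ≠ y) :
    m < |b x - b y| := by
  rcases hxy.lt_or_gt with hxy | hxy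
  · exact lt_of_lt_of_le (hb x y hxy).1 (le_abs_self _)
  · rw [abs_sub_comm]; exact lt_of_lt_of_le (hb y x hxy).1 (le_abs_self _)

theorem DeepRow.abs_add_sub_add_le {b : Fin n → ℤ} (hb : DeepRow p m b) (hmp : m < p)
    (x y : Fin n) {D D' : ℤ} (hD : D ∈ Set.Icc 0 ((m : ℤ) - 1))
    (hD' : D' ∈ Set.Icc 0 ((m : ℤ) - 1)) : |(b x + D) - (b y + D')| ≤ p - 2 := by
  have := hb.sub_le hmp x y
  have := hb.sub_le hmp y x
  rw [abs_le]; constructor <;> linarith [hD.1, hD.2, hD'.1, hD'.2]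

theorem DeepRow.eq_of_add_sub_mul_eq {b : Fin n → ℤ} (hb : DeepRow p m b) (hmp : m < p)
    {x y : Fin n} {D D' d d' : ℤ} (hD : D ∈ Set.Icc 0 ((m : ℤ) - 1))
    (hD' : D' ∈ Set.Icc 0 ((m : ℤ) - 1)) (h : b x + D - p * d = b y + D' - p * d') : x = y := by
  have hd : d = d' := eq_of_abs_mul_sub_mul_lt <| by
    have := hb.abs_add_sub_add_le hmp x y hD hD'
    rw [show (p : ℤ) * d - p * d' = (b x + D) - (b y + D') by linarith]
    omega
  by_contra hxy
  have hsep := hb.lt_abs_sub hxy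
  rw [show b x - b y = D' - D by subst hd; linarith, lt_abs] at hsep
  rcases hsep with hsep | hsep <;> linarith [hD.1, hD.2, hD'.1, hD'.2]

theorem DeepRow.add_gap {b w : Fin n → ℤ} (hb : DeepRow p m b) (hw : ∀ x y, w x - w y ≤ m - 1)
    {x y : Fin n} (hxy : x < y) :
    2 ≤ (b x + w x) - (b y + w y) ∧ (b x + w x) - (b y + w y) ≤ p - 2 := by
  have := hb x y hxy
  have := hw x y
  have := hw y x
  constructor <;> linarith

theorem RestrictedRow.le_and_sub_le {a : Fin n → ℤ} (ha : RestrictedRow p a) (k : ℕ) (x : Fin n)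
    (h : (x : ℕ) + k < n) : a ⟨x + k, h⟩ ≤ a x ∧ a x - a ⟨x + k, h⟩ ≤ p * k := by
  induction k with
  | zero => simp
  | succ k ih =>
    have h₁ := ih (by omega)
    have h₂ : 1 ≤ a ⟨x + k, _⟩ - a ⟨x + (k + 1), h⟩ ∧ a ⟨x + k, _⟩ - a ⟨x + (k + 1), h⟩ ≤ p :=
      ha ⟨x + k, by omega⟩ h
    push_cast
    constructor <;> linarith

theorem RestrictedRow.sub_le {a : Fin n → ℤ} (ha : RestrictedRow p a) (x y : Fin n) :
    a y - a x ≤ p * ((n : ℤ) - 1) := by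
  rcases le_total x y with hxy | hxy
  · obtain ⟨k, hk⟩ := Nat.exists_eq_add_of_le (Fin.le_def.mp hxy)
    have := ha.le_and_sub_le k x (by omega)
    rw [show (⟨x + k, _⟩ : Fin n) = y from Fin.ext hk.symm] at this
    have : (0 : ℤ) ≤ p * ((n : ℤ) - 1) := mul_nonneg (by positivity) (by omega)
    linarith
  · obtain ⟨k, hk⟩ := Nat.exists_eq_add_of_le (Fin.le_def.mp hxy)
    have := ha.le_and_sub_le k y (by omega)
    rw [show (⟨y + k, _⟩ : Fin n) = x from Fin.ext hk.symm] at this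
    have : (p : ℤ) * k ≤ p * ((n : ℤ) - 1) := mul_le_mul_of_nonneg_left (by omega) (by positivity)
    linarith

variable {u v : Fin n → ℤ} {σ : Perm (Fin n)}

theorem apply_succ_eq_of_restrictedRow
    (hu : ∀ x y, x < y → 2 ≤ u x - u y ∧ u x - u y ≤ p - 2)
    (hA : RestrictedRow p fun i => u (σ i) - p * v (σ i)) {k : ℕ} (hk : k + 1 < n) :
    v (σ ⟨k + 1, hk⟩) =
      v (σ ⟨k, by omega⟩) + if σ ⟨k + 1, hk⟩ < σ ⟨k, by omega⟩ then 1 else 0 := by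
  have hA' := hA ⟨k, by omega⟩ hk
  simp only at hA'
  apply eq_of_abs_mul_sub_mul_lt (p := p)
  have hne : σ ⟨k, by omega⟩ ≠ σ ⟨k + 1, hk⟩ := fun h => by simpa using σ.injective h
  split_ifs with hlt
  · have := hu _ _ hlt
    rw [abs_lt]; constructor <;> linarith
  · have := hu _ _ (lt_of_le_of_ne (not_lt.mp hlt) hne)
    rw [abs_lt]; constructor <;> linarith

theorem eq_add_descents_of_restrictedRow
    (hu : ∀ x y, x < y → 2 ≤ u x - u y ∧ u x - u y ≤ p - 2)
    (hA : RestrictedRow p fun i => u (σ i) - p * v (σ i)) (h0 : 0 < n) :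
    ∀ (k : ℕ) (hk : k < n), v (σ ⟨k, hk⟩) = v (σ ⟨0, h0⟩) + descents σ k := by
  intro k
  induction k with
  | zero => intro hk; simp [descents]
  | succ k ih =>
    intro hk
    rw [apply_succ_eq_of_restrictedRow hu hA hk, ih, descents_succ σ hk]
    ring

theorem restrictedRow_sub_mul_descents
    (hu : ∀ x y, x < y → 2 ≤ u x - u y ∧ u x - u y ≤ p - 2) :
    RestrictedRow p fun i => u (σ i) - p * descents σ i := by
  intro i hi
  have hne : σ i ≠ σ ⟨i + 1, hi⟩ := fun h => by simpa [Fin.ext_iff] using σ.injective h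
  simp only [descents_succ σ hi]
  split_ifs with hlt
  · have := hu _ _ hlt
    constructor <;> linarith
  · have := hu _ _ (lt_of_le_of_ne (not_lt.mp hlt) hne)
    constructor <;> linarith

end Row

def CongrModX0 (p : ℕ) (a b : Xf n f) : Prop :=
  ∃ ξ ∈ X0 n f, a - b = (p : ℤ) • ξ - sh ξ

theorem equivalence_congrModX0 (p : ℕ) : Equivalence (CongrModX0 (n := n) (f := f) p) where
  refl a := ⟨0, fun _ _ _ => rfl, by funext j i; simp [sh]⟩
  symm := fun ⟨ξ, hξ, h⟩ => ⟨-ξ, fun j i k => by simp [hξ j i k], by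
    rw [← neg_sub, h]; funext j i; simp [sh]; ring⟩
  trans := fun ⟨ξ, hξ, h⟩ ⟨ζ, hζ, h'⟩ => ⟨ξ + ζ, fun j i k => by simp [hξ j i k, hζ j i k], by
    rw [← sub_add_sub_cancel, h, h']; funext j i; simp [sh]; ring⟩

theorem congrModX0_sub_right {p : ℕ} {a b c : Xf n f} :
    CongrModX0 p (a - c) (b - c) ↔ CongrModX0 p a b := by
  simp only [CongrModX0, sub_sub_sub_cancel_right]

theorem mem_X1_iff {p : ℕ} {lam : Xf n f} :
    lam ∈ X1 n f p ↔ ∀ j, RestrictedRow p ((lam + etaf n f) j) := by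
  refine forall_congr' fun j => forall_congr' fun i => forall_congr' fun h => ?_
  have : eta0 n i - eta0 n ⟨i + 1, h⟩ = 1 := by simp only [eta0]; push_cast; ring
  simp only [Pi.add_apply, etaf]
  constructor <;> rintro ⟨h₁, h₂⟩ <;> constructor <;> linarith

section Presentation

variable {p : ℕ} {s σ σ' : WfG n f} {A B ν : Xf n f}

/-- The weight `A` with `B = σ(A) + pν − s(πν)`, i.e. `^(ν,σ)(σ⁻¹ s π(σ), A) = (s, B)`. -/
def conjPreimage (p : ℕ) (s : WfG n f) (B : Xf n f) (σ : WfG n f) (ν : Xf n f) : Xf n f :=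
  fun j i => B j (σ j i) + sh ν j ((s j)⁻¹ (σ j i)) - p * ν j (σ j i)

theorem exists_pairEquiv_iff :
    (∃ w, pairEquiv p w A s B) ↔ ∃ σ ν, A = conjPreimage p s B σ ν := by
  constructor
  · rintro ⟨w, ν, σ, rfl, hB⟩
    refine ⟨σ, ν, funext fun j => funext fun i => ?_⟩
    have := congrFun (congrFun hB j) (σ j i)
    simp only [conjX, permAct, Perm.coe_inv, Equiv.symm_apply_apply] at this
    simp only [conjPreimage, Perm.coe_inv] at this ⊢
    linarith
  · rintro ⟨σ, ν, rfl⟩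
    have hs : s = conjW σ (fun j => (σ j)⁻¹ * s j * shW σ j) := by
      funext j; simp only [conjW]; group
    refine ⟨_, ν, σ, hs, funext fun j => funext fun i => ?_⟩
    simp only [conjX, permAct, ← hs, conjPreimage, Perm.coe_inv, Equiv.apply_symm_apply]
    ring

theorem conjPreimage_add_of_mem_X0 {ξ : Xf n f} (hξ : ξ ∈ X0 n f) :
    conjPreimage p s B σ (ν + ξ) = conjPreimage p s B σ ν - ((p : ℤ) • ξ - sh ξ) := by
  funext j i
  simp only [conjPreimage, sh, Pi.add_apply, Pi.sub_apply, Pi.smul_apply, smul_eq_mul]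
  rw [hξ j (σ j i) i, hξ _ ((s j)⁻¹ (σ j i)) i]
  ring

def descentNu (σ : WfG n f) : Xf n f := fun j a => descents (σ j) ((σ j)⁻¹ a)

theorem descentNu_mem_Icc (σ : WfG n f) (j : Fin f) (a : Fin n) :
    descentNu σ j a ∈ Set.Icc 0 ((n : ℤ) - 1) := by
  obtain ⟨h₀, h₁⟩ := descents_mem_Icc (σ j) ((σ j)⁻¹ a)
  exact ⟨h₀, h₁.trans (by have := ((σ j)⁻¹ a).is_lt; omega)⟩

def canonicalPreimage (p : ℕ) (s : WfG n f) (B : Xf n f) (σ : WfG n f) : Xf n f :=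
  conjPreimage p s B σ (descentNu σ)

theorem canonicalPreimage_apply (j : Fin f) (i : Fin n) :
    canonicalPreimage p s B σ j i = B j (σ j i)
      + descentNu σ ((finRotate f)⁻¹ j) ((s j)⁻¹ (σ j i)) - p * descents (σ j) i := by
  simp [canonicalPreimage, conjPreimage, descentNu, sh]

theorem restrictedRow_canonicalPreimage (hB : ∀ j, DeepRow p n (B j)) (j : Fin f) :
    RestrictedRow p (canonicalPreimage p s B σ j) := by
  have hrow : canonicalPreimage p s B σ j = fun i =>
      (fun a => B j a + descentNu σ ((finRotate f)⁻¹ j) ((s j)⁻¹ a)) (σ j i)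
        - p * descents (σ j) i := funext fun i => canonicalPreimage_apply j i
  rw [hrow]
  refine restrictedRow_sub_mul_descents fun x y hxy =>
    (hB j).add_gap (w := fun a => descentNu σ ((finRotate f)⁻¹ j) ((s j)⁻¹ a)) (fun x y => ?_) hxy
  have := descentNu_mem_Icc σ ((finRotate f)⁻¹ j) ((s j)⁻¹ x)
  have := descentNu_mem_Icc σ ((finRotate f)⁻¹ j) ((s j)⁻¹ y)
  simp only [Set.mem_Icc] at *
  omega

theorem nu_sub_le_of_restrictedRow (hB : ∀ j, DeepRow p n (B j)) (hnp : n < p)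
    (hA : ∀ j, RestrictedRow p (conjPreimage p s B σ ν j)) (j : Fin f) (a b : Fin n) :
    ν j a - ν j b ≤ n - 1 := by
  have key := sub_one_mul_le_of_forall_mul_le_add
    (fun q : Fin f × Fin n × Fin n => ((finRotate f)⁻¹ q.1, (s q.1)⁻¹ q.2.1, (s q.1)⁻¹ q.2.2))
    (x := fun q => ν q.1 q.2.1 - ν q.1 q.2.2) (p := p) (C := p * n - n - 1) (by omega) ?_ (j, a, b)
  · by_contra h
    nlinarith
  · rintro ⟨j, a, b⟩
    have hA' := (hA j).sub_le ((σ j)⁻¹ a) ((σ j)⁻¹ b)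
    simp only [conjPreimage, Perm.coe_inv, Equiv.apply_symm_apply] at hA'
    have := (hB j).sub_le hnp a b
    simp only [sh, Perm.coe_inv] at hA' ⊢
    linarith

theorem exists_eq_descentNu_add (hn : 0 < n) (hB : ∀ j, DeepRow p n (B j)) (hnp : n < p)
    (hA : ∀ j, RestrictedRow p (conjPreimage p s B σ ν j)) :
    ∃ ξ ∈ X0 n f, ν = descentNu σ + ξ := by
  refine ⟨fun j _ => ν j (σ j ⟨0, hn⟩), fun _ _ _ => rfl, funext fun j => funext fun a => ?_⟩
  have hu (x y : Fin n) (hxy : x < y) :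
      2 ≤ (B j x + sh ν j ((s j)⁻¹ x)) - (B j y + sh ν j ((s j)⁻¹ y)) ∧
        (B j x + sh ν j ((s j)⁻¹ x)) - (B j y + sh ν j ((s j)⁻¹ y)) ≤ p - 2 :=
    (hB j).add_gap (fun x y => nu_sub_le_of_restrictedRow hB hnp hA _ _ _) hxy
  have := eq_add_descents_of_restrictedRow hu (hA j) hn ((σ j)⁻¹ a) (Fin.is_lt _)
  show ν j a = descentNu σ j a + ν j (σ j ⟨0, hn⟩)
  simp only [descentNu, Fin.eta, Perm.coe_inv, Equiv.apply_symm_apply] at this ⊢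
  rw [this, add_comm]

theorem congrModX0_canonicalPreimage (hn : 0 < n) (hB : ∀ j, DeepRow p n (B j)) (hnp : n < p)
    (hA : ∀ j, RestrictedRow p (conjPreimage p s B σ ν j)) :
    CongrModX0 p (canonicalPreimage p s B σ) (conjPreimage p s B σ ν) := by
  obtain ⟨ξ, hξ, rfl⟩ := exists_eq_descentNu_add hn hB hnp hA
  exact ⟨ξ, hξ, by rw [conjPreimage_add_of_mem_X0 hξ]; exact sub_sub_cancel _ _⟩

theorem eq_of_congrModX0_canonicalPreimage (hn : 0 < n) (hB : ∀ j, DeepRow p n (B j))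
    (hnp : n < p) (h : CongrModX0 p (canonicalPreimage p s B σ) (canonicalPreimage p s B σ')) :
    σ = σ' := by
  obtain ⟨ξ, hξ, hdiff⟩ := h
  set c : Fin f → ℤ := fun j => ξ j ⟨0, hn⟩
  have hrow (j : Fin f) (i : Fin n) :
      canonicalPreimage p s B σ j i - canonicalPreimage p s B σ' j i =
        p * c j - c ((finRotate f)⁻¹ j) := by
    have := congrFun (congrFun hdiff j) i
    simp only [Pi.sub_apply, Pi.smul_apply, smul_eq_mul, sh] at this
    rw [this, hξ j i ⟨0, hn⟩, hξ _ i ⟨0, hn⟩]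
  -- at `i = 0` there are no descents, so the shifts `c` form a contracting system
  have hc : c = 0 := eq_zero_of_forall_abs_mul_sub_le (fun j => (finRotate f)⁻¹ j) fun j => by
    rw [← hrow j ⟨0, hn⟩, canonicalPreimage_apply, canonicalPreimage_apply]
    simpa [descents] using (hB j).abs_add_sub_add_le hnp _ _ (descentNu_mem_Icc _ _ _)
      (descentNu_mem_Icc _ _ _)
  funext j
  ext i
  have := hrow j i
  simp only [hc, Pi.zero_apply, mul_zero, sub_zero, canonicalPreimage_apply] at this
  exact congrArg Fin.val <| (hB j).eq_of_add_sub_mul_eq hnp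
    (descentNu_mem_Icc σ _ ((s j)⁻¹ (σ j i))) (descentNu_mem_Icc σ' _ ((s j)⁻¹ (σ' j i)))
    (d := descents (σ j) i) (d' := descents (σ' j) i) (by linarith)

end Presentation

section ObviousWeights

variable {p : ℕ} {s σ σ' : WfG n f} {μ : Xf n f}

def canonicalWeight (p : ℕ) (s : WfG n f) (μ : Xf n f) (σ : WfG n f) : Xf n f :=
  canonicalPreimage p s (μ + etaf n f) σ - etaf n f

theorem canonicalWeight_mem (hμ : deep p n μ) (σ : WfG n f) :
    canonicalWeight p s μ σ ∈ X1 n f p ∧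
      ∃ w, pairEquiv p w (canonicalWeight p s μ σ + etaf n f) s (μ + etaf n f) := by
  refine ⟨mem_X1_iff.mpr ?_, exists_pairEquiv_iff.mpr ⟨σ, _, sub_add_cancel _ _⟩⟩
  simpa only [canonicalWeight, sub_add_cancel] using
    restrictedRow_canonicalPreimage (DeepRow.of_deep hμ)

theorem exists_congrModX0_canonicalWeight (hn : 0 < n) (hnp : n < p) (hμ : deep p n μ)
    {lam : Xf n f} (hlam : lam ∈ X1 n f p)
    (h : ∃ w, pairEquiv p w (lam + etaf n f) s (μ + etaf n f)) :
    ∃ σ, CongrModX0 p (canonicalWeight p s μ σ) lam := by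
  obtain ⟨σ, ν, hlam'⟩ := exists_pairEquiv_iff.mp h
  have hA := mem_X1_iff.mp hlam
  rw [hlam'] at hA
  have := congrModX0_canonicalPreimage hn (DeepRow.of_deep hμ) hnp hA
  rw [← hlam', ← congrModX0_sub_right (c := etaf n f), add_sub_cancel_right] at this
  exact ⟨σ, this⟩

theorem eq_of_congrModX0_canonicalWeight (hn : 0 < n) (hnp : n < p) (hμ : deep p n μ)
    (h : CongrModX0 p (canonicalWeight p s μ σ) (canonicalWeight p s μ σ')) : σ = σ' :=
  eq_of_congrModX0_canonicalPreimage hn (DeepRow.of_deep hμ) hnp (congrModX0_sub_right.mp h)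

end ObviousWeights

theorem statement4_general (n f p : ℕ) (hn : 2 ≤ n) (hnp : n < p)
    (s : WfG n f) (μ : Xf n f) (hμ : deep p n μ) :
    Nat.card (Quot (fun (a b : {lam : Xf n f //
        lam ∈ X1 n f p ∧ ∃ w : WfG n f, pairEquiv p w (lam + etaf n f) s (μ + etaf n f)}) =>
      ∃ ξ ∈ X0 n f, a.1 - b.1 = (p : ℤ) • ξ - sh ξ)) = n.factorial ^ f := by
  let S := {lam : Xf n f //
    lam ∈ X1 n f p ∧ ∃ w : WfG n f, pairEquiv p w (lam + etaf n f) s (μ + etaf n f)}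
  let Φ (σ : WfG n f) : Quot fun a b : S => CongrModX0 p a.1 b.1 :=
    Quot.mk _ ⟨canonicalWeight p s μ σ, canonicalWeight_mem hμ σ⟩
  have hΦ : Function.Bijective Φ := by
    refine ⟨fun σ σ' h => ?_, Quot.ind fun x => ?_⟩
    · exact eq_of_congrModX0_canonicalWeight (by omega) hnp hμ
        ((((equivalence_congrModX0 p).comap Subtype.val).quot_mk_eq_iff _ _).mp h)
    · obtain ⟨σ, hσ⟩ := exists_congrModX0_canonicalWeight (by omega) hnp hμ x.2.1 x.2.2
      exact ⟨σ, Quot.sound hσ⟩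
  change Nat.card (Quot fun a b : S => CongrModX0 p a.1 b.1) = _
  rw [← Nat.card_congr (Equiv.ofBijective Φ hΦ), Nat.card_pi]
  simp [Fintype.card_perm]

/-- for `μ` n-deep in `C₀` and `s ∈ Wf`, the set of p-restricted
weights `λ` with `(w, λ + η) ∼ (s, μ + η)` for some `w ∈ Wf`, taken modulo
`λ ≡ λ'` iff `λ − λ' ∈ (p − π)X⁰`, has exactly `(n!)^f` elements. -/
theorem statement4 (n f p : ℕ) (hn : 2 ≤ n) (hf : 1 ≤ f) (hp : p.Prime) (hnp : n < p)
    (s : WfG n f) (μ : Xf n f) (hμ : deep p n μ) :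
    Nat.card (Quot (fun (a b : {lam : Xf n f //
        lam ∈ X1 n f p ∧ ∃ w : WfG n f, pairEquiv p w (lam + etaf n f) s (μ + etaf n f)}) =>
      ∃ ξ ∈ X0 n f, a.1 - b.1 = (p : ℤ) • ξ - sh ξ)) = n.factorial ^ f :=
  statement4_general n f p hn hnp s μ hμ

end LLLSerre
end
end

section
/- Let d ≥ 1, let μ ∈ Xf be d-deep in C₀ and let s ∈ Wf. (i) If (ν, σ) ∈ Xf ⋊ Wf and the pair (s′, μ′ + η) := ^(ν,σ)(s, μ + η) satisfies 0 < ⟨μ′_j + η₀, α^∨⟩ < p for all j and positive coroots α^∨ (i.e. μ′ lies in C₀), then μ′ is (d−1)-deep in C₀ and t_ν σ ∈ Ωf (the dot-action stabilizer of C₀). (ii) Conversely, for every (ν, σ) with t_ν σ ∈ Ωf, the pair (s′, μ′ + η) := ^(ν,σ)(s, μ + η) satisfies that μ′ is (d−1)-deep in C₀. -/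
/-!
Common setup: the extended affine Weyl group of `GL_n` (f-fold product), its dot
action on `(ℝ^n)^f`, p-alcoves, lengths, Bruhat orders (dominant and antidominant),
the up (↑) order, admissible sets, and the combinatorics of lowest alcove
presentations, following Le–Le Hung–Levin, "Weight elimination in Serre-type
conjectures".
-/

noncomputable section

/-!
Write `μ' = ^(ν,σ)(s, μ + η) - η` and let `g_j(x,y)` be the number of walls by which `t_ν σ`
moves `C₀` in the direction of the root `(x,y)`, so that `t_ν σ ∈ Ωf` exactly when `g = 0`.
Normalizing pairings into `(0, p)` by adding `p` on inverted pairs, the pairing of `μ'` at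
`(σ_j x, σ_j y)` is that of `μ` at `(x, y)` plus `p g_j(x,y) - g_{j-1}(s_j⁻¹x, s_j⁻¹y) + c`
with `|c| ≤ 1`. So if `g = 0` depth drops by at most one. If `μ'` lies in `C₀`, then at a
maximum `G ≥ 1` of `g` we would get `(p - 1) G ≤ p - d - 1 < p - 1`; hence `g ≤ 0`, and
`g = 0` because `g` is antisymmetric.
-/

namespace LLLSerre

section Alcove

variable {n f p : ℕ}

lemma lt_natCast_mul_intCast_iff {a : ℝ} (ha : 0 < a) (hap : a < p) (m : ℤ) :
    a < (p : ℝ) * (m : ℝ) ↔ 0 < m := by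
  constructor
  · intro h
    by_contra hm
    have : (m : ℝ) ≤ 0 := by exact_mod_cast not_lt.mp hm
    nlinarith [(Nat.cast_nonneg p : (0 : ℝ) ≤ p)]
  · intro hm
    have : (1 : ℝ) ≤ m := by exact_mod_cast hm
    nlinarith

lemma ne_natCast_mul_intCast {a : ℝ} (ha : 0 < a) (hap : a < p) (m : ℤ) :
    a ≠ (p : ℝ) * (m : ℝ) := by
  intro h
  rcases le_or_gt m 0 with hm | hm
  · have : (m : ℝ) ≤ 0 := by exact_mod_cast hm
    nlinarith [(Nat.cast_nonneg p : (0 : ℝ) ≤ p)]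
  · have : (1 : ℝ) ≤ m := by exact_mod_cast hm
    nlinarith

lemma eta0_sub_eta0 (i k : Fin n) : eta0 n i - eta0 n k = (k : ℤ) - i := by
  simp only [eta0]; ring

lemma deep_zero (hnp : n < p) : deep p 0 (0 : Xf n f) := by
  intro j i k hik
  have : (i : ℕ) < k := hik
  simp only [prZ, Pi.zero_apply, zero_add, eta0_sub_eta0, Nat.cast_zero, sub_zero]
  omega

lemma sameAlcove_basePt_iff (hnp : n < p) (y : RPt n f) :
    sameAlcove p (basePt n f) y ↔
      ∀ (j : Fin f) (i k : Fin n), i < k → 0 < prR y j i k ∧ prR y j i k < p := by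
  have hbase : ∀ (j : Fin f) (i k : Fin n), i < k →
      0 < prR (basePt n f) j i k ∧ prR (basePt n f) j i k < p := by
    intro j i k hik
    have h := deep_zero (f := f) hnp j i k hik
    simp only [prR, prZ, basePt, Pi.zero_apply, Nat.cast_zero, sub_zero] at h ⊢
    constructor <;> [exact_mod_cast h.1; exact_mod_cast h.2]
  constructor
  · rintro ⟨-, hreg, hside⟩ j i k hik
    obtain ⟨h0, hp⟩ := hbase j i k hik
    have hpos := (hside j i k 0 hik).not
    have hlt := (hside j i k 1 hik).mp (by simpa using hp)
    simp only [Int.cast_zero, mul_zero, Int.cast_one, mul_one, not_lt] at hpos hlt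
    exact ⟨lt_of_le_of_ne (hpos.mp h0.le) (by simpa using (hreg j i k 0 hik).symm), hlt⟩
  · intro hy
    refine ⟨fun j i k m hik => ?_, fun j i k m hik => ?_, fun j i k m hik => ?_⟩
    · exact ne_natCast_mul_intCast (hbase j i k hik).1 (hbase j i k hik).2 m
    · exact ne_natCast_mul_intCast (hy j i k hik).1 (hy j i k hik).2 m
    · rw [lt_natCast_mul_intCast_iff (hbase j i k hik).1 (hbase j i k hik).2,
        lt_natCast_mul_intCast_iff (hy j i k hik).1 (hy j i k hik).2]

lemma dotR_basePt (a : Wtf n f) : dotR p a (basePt n f) = toR (dotZ p a 0) := by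
  funext j i
  simp only [dotR, dotZ, toR, basePt, Pi.zero_apply]
  push_cast
  ring

lemma prR_toR (lam : Xf n f) (j : Fin f) (i k : Fin n) :
    prR (toR lam) j i k = prZ lam j i k := by
  simp only [prR, prZ, toR]
  push_cast
  ring

lemma mem_Omegaf_iff (hnp : n < p) (a : Wtf n f) :
    a ∈ Omegaf n f p ↔ deep p 0 (dotZ p a 0) := by
  simp only [Omegaf, Set.mem_ofPred_eq, sameAlcove_basePt_iff hnp, dotR_basePt, prR_toR, deep,
    Nat.cast_zero, sub_zero]
  exact_mod_cast Iff.rfl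

end Alcove

/-- Take `i` maximizing `g`: if `g i ≥ 1`, then `(p - 1) g i ≤ p g i - g (τ i) ≤ p - 2`. -/
lemma nonpos_of_mul_sub_comp_le {ι : Type*} [Finite ι] {p : ℤ} (hp : 1 ≤ p) {g : ι → ℤ}
    (τ : ι → ι) (h : ∀ i, 0 < g i → p * g i - g (τ i) ≤ p - 2) (i : ι) : g i ≤ 0 := by
  by_contra! hi
  have : Nonempty ι := ⟨i⟩
  obtain ⟨i₀, hi₀⟩ := Finite.exists_max g
  have hpos : 0 < g i₀ := hi.trans_le (hi₀ i)
  have := h i₀ hpos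
  have := hi₀ (τ i₀)
  nlinarith

section WallShift

variable {n f p : ℕ}

def inversion (x y : Fin n) : ℤ := if y < x then 1 else 0

lemma inversion_nonneg (x y : Fin n) : 0 ≤ inversion x y := by
  unfold inversion; split_ifs <;> norm_num

lemma inversion_le_one (x y : Fin n) : inversion x y ≤ 1 := by
  unfold inversion; split_ifs <;> norm_num

lemma inversion_add_inversion {x y : Fin n} (h : x ≠ y) : inversion x y + inversion y x = 1 := by
  rcases h.lt_or_gt with h | h
  · simp [inversion, h, h.not_gt]
  · simp [inversion, h, h.not_gt]

/-- Shifting by `p` on inverted pairs makes the depth condition symmetric: `λ ∈ C₀` is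
`m`-deep iff this lies in `(m, p - m)` for every `x ≠ y`, in either order. -/
def normPair (p : ℕ) (lam : Xf n f) (j : Fin f) (x y : Fin n) : ℤ :=
  prZ lam j x y + p * inversion x y

lemma deep.normPair_mem {m : ℕ} {lam : Xf n f} (h : deep p m lam) (j : Fin f) {x y : Fin n}
    (hxy : x ≠ y) : m < normPair p lam j x y ∧ normPair p lam j x y < p - m := by
  rcases hxy.lt_or_gt with hlt | hlt
  · simpa [normPair, inversion, hlt.not_gt] using h j x y hlt
  · have := h j y x hlt
    simp only [normPair, inversion, hlt, if_true, prZ] at this ⊢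
    constructor <;> linarith

lemma deep_of_normPair_mem {m : ℕ} {lam : Xf n f} (σ : WfG n f)
    (h : ∀ (j : Fin f) (x y : Fin n), x ≠ y →
      m < normPair p lam j (σ j x) (σ j y) ∧ normPair p lam j (σ j x) (σ j y) < p - m) :
    deep p m lam := by
  intro j i k hik
  have := h j ((σ j)⁻¹ i) ((σ j)⁻¹ k) (by simpa using hik.ne)
  simpa [normPair, inversion, hik.not_gt] using this

/-- The number of walls by which `t_ν σ` moves `C₀` in the direction `(x, y)`. -/
def wallShift (ν : Xf n f) (σ : WfG n f) (j : Fin f) (x y : Fin n) : ℤ :=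
  ν j (σ j x) - ν j (σ j y) - inversion x y + inversion (σ j x) (σ j y)

lemma wallShift_swap (ν : Xf n f) (σ : WfG n f) (j : Fin f) (x y : Fin n) :
    wallShift ν σ j y x = -wallShift ν σ j x y := by
  rcases eq_or_ne x y with rfl | hxy
  · simp [wallShift, inversion]
  · have h₁ := inversion_add_inversion hxy
    have h₂ := inversion_add_inversion ((σ j).injective.ne hxy)
    simp only [wallShift]
    linarith

lemma normPair_dotZ (ν : Xf n f) (σ : WfG n f) (j : Fin f) (x y : Fin n) :
    normPair p (dotZ p (Wtf.mul (transl ν) (ofW σ)) 0) j (σ j x) (σ j y) =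
      normPair p 0 j x y + p * wallShift ν σ j x y := by
  simp only [normPair, prZ, dotZ, wallShift, Wtf.mul, transl, ofW, permAct, Pi.zero_apply,
    Pi.add_apply, one_mul, inv_inv, Equiv.Perm.coe_inv, Equiv.symm_apply_apply, zero_add]
  ring

lemma normPair_conjX (ν : Xf n f) (σ s : WfG n f) (μ : Xf n f) (j : Fin f) (x y : Fin n) :
    let j' := (finRotate f)⁻¹ j
    normPair p (conjX p ν σ s (μ + etaf n f) - etaf n f) j (σ j x) (σ j y) =
      normPair p μ j x y + p * wallShift ν σ j x y - wallShift ν σ j' ((s j)⁻¹ x) ((s j)⁻¹ y)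
        - inversion ((s j)⁻¹ x) ((s j)⁻¹ y)
        + inversion (σ j' ((s j)⁻¹ x)) (σ j' ((s j)⁻¹ y)) := by
  simp only [normPair, prZ, conjX, conjW, shW, sh, permAct, etaf, wallShift, Pi.add_apply,
    Pi.sub_apply, mul_inv_rev, inv_inv, Equiv.Perm.mul_apply, Equiv.Perm.coe_inv, Equiv.symm_apply_apply]
  ring

lemma eq_zero_of_pos_of_add_mul_lt {a p g : ℤ} (ha : 0 < a) (hap : a < p)
    (h₀ : 0 < a + p * g) (h₁ : a + p * g < p) : g = 0 := by
  rcases lt_trichotomy g 0 with hg | hg | hg <;> [nlinarith; exact hg; nlinarith]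

lemma transl_mul_mem_Omegaf_iff (hnp : n < p) (ν : Xf n f) (σ : WfG n f) :
    Wtf.mul (transl ν) (ofW σ) ∈ Omegaf n f p ↔ ∀ j x y, wallShift ν σ j x y = 0 := by
  have hzero := deep_zero (f := f) hnp
  rw [mem_Omegaf_iff hnp]
  constructor
  · intro h j x y
    rcases eq_or_ne x y with rfl | hxy
    · simp [wallShift, inversion]
    · have hz := h.normPair_mem j ((σ j).injective.ne hxy)
      have h0 := hzero.normPair_mem j hxy
      rw [normPair_dotZ] at hz
      simp only [Nat.cast_zero, sub_zero] at hz h0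
      exact eq_zero_of_pos_of_add_mul_lt h0.1 h0.2 hz.1 hz.2
  · intro h
    refine deep_of_normPair_mem σ fun j x y hxy => ?_
    rw [normPair_dotZ, h, mul_zero, add_zero]
    exact hzero.normPair_mem j hxy

variable {d : ℕ} {μ ν : Xf n f} {σ s : WfG n f}

lemma deep_conjX_of_wallShift_eq_zero (hd : 1 ≤ d) (hμ : deep p d μ)
    (hg : ∀ j x y, wallShift ν σ j x y = 0) :
    deep p (d - 1) (conjX p ν σ s (μ + etaf n f) - etaf n f) := by
  refine deep_of_normPair_mem σ fun j x y hxy => ?_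
  obtain ⟨hlo, hhi⟩ := hμ.normPair_mem j hxy
  rw [normPair_conjX, hg, hg, Nat.cast_sub hd]
  have := inversion_nonneg ((s j)⁻¹ x) ((s j)⁻¹ y)
  have := inversion_le_one ((s j)⁻¹ x) ((s j)⁻¹ y)
  have := inversion_nonneg (σ ((finRotate f)⁻¹ j) ((s j)⁻¹ x)) (σ ((finRotate f)⁻¹ j) ((s j)⁻¹ y))
  have := inversion_le_one (σ ((finRotate f)⁻¹ j) ((s j)⁻¹ x)) (σ ((finRotate f)⁻¹ j) ((s j)⁻¹ y))
  constructor <;> push_cast <;> linarith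

lemma mul_wallShift_sub_le_of_deep (hμ : deep p d μ)
    (h₀ : deep p 0 (conjX p ν σ s (μ + etaf n f) - etaf n f)) (j : Fin f) {x y : Fin n}
    (hxy : x ≠ y) :
    p * wallShift ν σ j x y - wallShift ν σ ((finRotate f)⁻¹ j) ((s j)⁻¹ x) ((s j)⁻¹ y)
      ≤ p - d - 1 := by
  have hlo := (hμ.normPair_mem j hxy).1
  have hhi := (h₀.normPair_mem j ((σ j).injective.ne hxy)).2
  rw [normPair_conjX] at hhi
  have := inversion_le_one ((s j)⁻¹ x) ((s j)⁻¹ y)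
  have := inversion_nonneg (σ ((finRotate f)⁻¹ j) ((s j)⁻¹ x)) (σ ((finRotate f)⁻¹ j) ((s j)⁻¹ y))
  push_cast at hhi
  linarith

lemma wallShift_eq_zero_of_deep (hnp : n < p) (hd : 1 ≤ d) (hμ : deep p d μ)
    (h₀ : deep p 0 (conjX p ν σ s (μ + etaf n f) - etaf n f)) (j : Fin f) (x y : Fin n) :
    wallShift ν σ j x y = 0 := by
  have hle : ∀ q : Fin f × Fin n × Fin n, wallShift ν σ q.1 q.2.1 q.2.2 ≤ 0 := by
    refine nonpos_of_mul_sub_comp_le (p := p) (by omega)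
      (fun q => ((finRotate f)⁻¹ q.1, (s q.1)⁻¹ q.2.1, (s q.1)⁻¹ q.2.2)) ?_
    rintro ⟨j, x, y⟩ hpos
    have hxy : x ≠ y := by
      rintro rfl
      simp [wallShift, inversion] at hpos
    have := mul_wallShift_sub_le_of_deep hμ h₀ j hxy
    push_cast at this ⊢
    omega
  have := hle (j, y, x)
  rw [wallShift_swap] at this
  exact le_antisymm (hle (j, x, y)) (by simpa using this)

end WallShift

theorem statement5_general (n f p d : ℕ) (hnp : n < p)
    (hd : 1 ≤ d) (μ : Xf n f) (hμ : deep p d μ) (s : WfG n f) :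
    (∀ (ν : Xf n f) (σ : WfG n f),
        deep p 0 (conjX p ν σ s (μ + etaf n f) - etaf n f) →
        deep p (d - 1) (conjX p ν σ s (μ + etaf n f) - etaf n f) ∧
          Wtf.mul (transl ν) (ofW σ) ∈ Omegaf n f p) ∧
    (∀ (ν : Xf n f) (σ : WfG n f),
        Wtf.mul (transl ν) (ofW σ) ∈ Omegaf n f p →
        deep p (d - 1) (conjX p ν σ s (μ + etaf n f) - etaf n f)) := by
  refine ⟨fun ν σ h₀ => ?_, fun ν σ hΩ => ?_⟩
  · have hg := wallShift_eq_zero_of_deep hnp hd hμ h₀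
    exact ⟨deep_conjX_of_wallShift_eq_zero hd hμ hg, (transl_mul_mem_Omegaf_iff hnp ν σ).2 hg⟩
  · exact deep_conjX_of_wallShift_eq_zero hd hμ ((transl_mul_mem_Omegaf_iff hnp ν σ).1 hΩ)

/-- let `μ` be d-deep in `C₀` (d ≥ 1) and `s ∈ Wf`. (i) If
`(s', μ' + η) = ^(ν,σ)(s, μ + η)` with `μ' ∈ C₀`, then `μ'` is (d−1)-deep and
`t_ν σ ∈ Ωf`. (ii) Conversely, if `t_ν σ ∈ Ωf` then the resulting `μ'` is
(d−1)-deep in `C₀`. -/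
theorem statement5 (n f p d : ℕ) (hn : 2 ≤ n) (hf : 1 ≤ f) (hp : p.Prime) (hnp : n < p)
    (hd : 1 ≤ d) (μ : Xf n f) (hμ : deep p d μ) (s : WfG n f) :
    (∀ (ν : Xf n f) (σ : WfG n f),
        deep p 0 (conjX p ν σ s (μ + etaf n f) - etaf n f) →
        deep p (d - 1) (conjX p ν σ s (μ + etaf n f) - etaf n f) ∧
          Wtf.mul (transl ν) (ofW σ) ∈ Omegaf n f p) ∧
    (∀ (ν : Xf n f) (σ : WfG n f),
        Wtf.mul (transl ν) (ofW σ) ∈ Omegaf n f p →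
        deep p (d - 1) (conjX p ν σ s (μ + etaf n f) - etaf n f)) :=
  statement5_general n f p d hnp hd μ hμ s

end LLLSerre
end
end

section
/- Suppose (s, μ) and (s′, μ′) in Wf × Xf satisfy: (s, μ) ∼ (s′, μ′); μ − η is 1-deep in C₀; μ′ − η lies in C₀ (i.e. 0 < ⟨(μ′ − η)_j + η₀, α^∨⟩ < p for all j and positive coroots α^∨); and μ − μ′ ∈ (Λ_R)^f, where Λ_R = {ν ∈ Z^n : ν_1 + … + ν_n = 0}. Then (s, μ) = (s′, μ′). -/
/-!
Common setup: the extended affine Weyl group of `GL_n` (f-fold product), its dot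
action on `(ℝ^n)^f`, p-alcoves, lengths, Bruhat orders (dominant and antidominant),
the up (↑) order, admissible sets, and the combinatorics of lowest alcove
presentations, following Le–Le Hung–Levin, "Weight elimination in Serre-type
conjectures".
-/

noncomputable section

namespace LLLSerre

private lemma sum_zero_diam_le_one {n : ℕ} (v : Fin n → ℤ) (hsum : ∑ i, v i = 0)
    (hd : ∀ i k, v i - v k ≤ 1) (i : Fin n) : v i = 0 := by
  rcases lt_trichotomy (v i) 0 with h | h | h
  · have hall : ∀ k, v k ≤ 0 := fun k => by have := hd k i; omega
    have hlt : ∑ k, v k < ∑ _k : Fin n, (0:ℤ) :=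
      Finset.sum_lt_sum (fun k _ => hall k) ⟨i, Finset.mem_univ i, h⟩
    simp at hlt; omega
  · exact h
  · have hall : ∀ k, (0:ℤ) ≤ v k := fun k => by have := hd i k; omega
    have hlt : ∑ _k : Fin n, (0:ℤ) < ∑ k, v k :=
      Finset.sum_lt_sum (fun k _ => hall k) ⟨i, Finset.mem_univ i, h⟩
    simp at hlt; omega

private lemma perm_strictMono_eq_one {n : ℕ} (σ : Equiv.Perm (Fin n))
    (h : StrictMono (fun i => σ i)) : σ = 1 := by
  have hr : Set.range (fun i => σ i) = Set.range (id : Fin n → Fin n) := by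
    rw [Set.range_id]
    exact σ.surjective.range_eq
  have := (h.range_inj strictMono_id).mp hr
  exact Equiv.ext fun i => congrFun this i

/-- if `(s, μ) ∼ (s', μ')`, `μ − η` is 1-deep in `C₀`, `μ' − η` lies
in `C₀`, and `μ − μ'` lies in the root lattice `(Λ_R)^f`, then `(s, μ) = (s', μ')`. -/
theorem statement7 (n f p : ℕ) (hn : 2 ≤ n) (hf : 1 ≤ f) (hp : p.Prime) (hnp : n < p)
    (s s' : WfG n f) (μ μ' : Xf n f)
    (hequiv : pairEquiv p s μ s' μ')
    (hμ : deep p 1 (μ - etaf n f))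
    (hμ' : deep p 0 (μ' - etaf n f))
    (hroot : ∀ j : Fin f, (∑ i, (μ j i - μ' j i)) = 0) :
    s = s' ∧ μ = μ' := by
  obtain ⟨ν, σ, hw, hx⟩ := hequiv
  haveI : Nonempty (Fin f) := ⟨⟨0, by omega⟩⟩
  haveI : Nonempty (Fin n) := ⟨⟨0, by omega⟩⟩
  have hpZ : (3:ℤ) ≤ (p:ℤ) := by exact_mod_cast (by omega : 3 ≤ p)
  -- pointwise formula
  have hEq : ∀ j i, μ' j i =
      μ j ((σ j)⁻¹ i) + (p:ℤ) * ν j i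
        - ν ((finRotate f)⁻¹ j) ((conjW σ s j)⁻¹ i) := by
    intro j i
    simpa [conjX, permAct, sh] using congrFun (congrFun hx j) i
  -- deepness bounds
  have hμd : ∀ (j : Fin f) (i k : Fin n), i < k →
      2 ≤ μ j i - μ j k ∧ μ j i - μ j k ≤ (p:ℤ) - 2 := by
    intro j i k hik
    have h := hμ j i k hik
    have hpr : prZ (μ - etaf n f) j i k = μ j i - μ j k := by
      simp [prZ, etaf]
    rw [hpr] at h
    omega
  have hμ'd : ∀ (j : Fin f) (i k : Fin n), i < k →
      1 ≤ μ' j i - μ' j k ∧ μ' j i - μ' j k ≤ (p:ℤ) - 1 := by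
    intro j i k hik
    have h := hμ' j i k hik
    have hpr : prZ (μ' - etaf n f) j i k = μ' j i - μ' j k := by
      simp [prZ, etaf]
    rw [hpr] at h
    omega
  -- row sums of ν vanish
  set S : Fin f → ℤ := fun j => ∑ i, ν j i with hSdef
  have hsumrel : ∀ j, (p:ℤ) * S j = S ((finRotate f)⁻¹ j) := by
    intro j
    have h1 : ∑ i, μ' j i
        = ∑ i, μ j i + (p:ℤ) * S j - S ((finRotate f)⁻¹ j) := by
      calc ∑ i, μ' j i
          = ∑ i, (μ j ((σ j)⁻¹ i) + (p:ℤ) * ν j i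
              - ν ((finRotate f)⁻¹ j) ((conjW σ s j)⁻¹ i)) :=
            Finset.sum_congr rfl fun i _ => hEq j i
        _ = (∑ i, μ j ((σ j)⁻¹ i)) + (p:ℤ) * (∑ i, ν j i)
              - ∑ i, ν ((finRotate f)⁻¹ j) ((conjW σ s j)⁻¹ i) := by
            rw [Finset.sum_sub_distrib, Finset.sum_add_distrib, Finset.mul_sum]
        _ = ∑ i, μ j i + (p:ℤ) * S j - S ((finRotate f)⁻¹ j) := by
            rw [Equiv.sum_comp ((σ j)⁻¹) (μ j),
              Equiv.sum_comp ((conjW σ s j)⁻¹) (ν ((finRotate f)⁻¹ j))]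
    have h2 := hroot j
    rw [Finset.sum_sub_distrib] at h2
    omega
  have hS0 : ∀ j, S j = 0 := by
    obtain ⟨j₀, -, hmax⟩ :=
      Finset.exists_max_image Finset.univ S Finset.univ_nonempty
    obtain ⟨j₁, -, hmin⟩ :=
      Finset.exists_min_image Finset.univ S Finset.univ_nonempty
    have h0 : S j₀ ≤ 0 := by
      have h := hsumrel j₀
      have h2 := hmax ((finRotate f)⁻¹ j₀) (Finset.mem_univ _)
      nlinarith
    have h1 : 0 ≤ S j₁ := by
      have h := hsumrel j₁
      have h2 := hmin ((finRotate f)⁻¹ j₁) (Finset.mem_univ _)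
      nlinarith
    intro j
    have := hmax j (Finset.mem_univ _)
    have := hmin j (Finset.mem_univ _)
    omega
  -- differences of ν are bounded by 1
  have hdiff : ∀ (j : Fin f) (i k : Fin n), (p:ℤ) * (ν j i - ν j k) =
      (μ' j i - μ' j k) - (μ j ((σ j)⁻¹ i) - μ j ((σ j)⁻¹ k))
        + (ν ((finRotate f)⁻¹ j) ((conjW σ s j)⁻¹ i)
            - ν ((finRotate f)⁻¹ j) ((conjW σ s j)⁻¹ k)) := by
    intro j i k
    linear_combination hEq j k - hEq j i
  obtain ⟨⟨j₀, i₀, k₀⟩, -, hmax⟩ :=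
    Finset.exists_max_image Finset.univ
      (fun q : Fin f × Fin n × Fin n => ν q.1 q.2.1 - ν q.1 q.2.2) Finset.univ_nonempty
  set M : ℤ := ν j₀ i₀ - ν j₀ k₀ with hMdef
  have hM0 : 0 ≤ M := by
    have := hmax (j₀, i₀, i₀) (Finset.mem_univ _)
    simpa using this
  have hM1 : M ≤ 1 := by
    rcases eq_or_ne i₀ k₀ with h | h
    · simp [hMdef, h]
    · have hd := hdiff j₀ i₀ k₀
      have hA' : μ' j₀ i₀ - μ' j₀ k₀ ≤ (p:ℤ) - 1 := by
        rcases lt_or_gt_of_ne h with hlt | hgt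
        · exact (hμ'd j₀ i₀ k₀ hlt).2
        · have := (hμ'd j₀ k₀ i₀ hgt).1; omega
      have hA : -((p:ℤ) - 2) ≤ μ j₀ ((σ j₀)⁻¹ i₀) - μ j₀ ((σ j₀)⁻¹ k₀) := by
        have hne : (σ j₀)⁻¹ i₀ ≠ (σ j₀)⁻¹ k₀ := fun hc => h (by
          simpa using congrArg (σ j₀) hc)
        rcases lt_or_gt_of_ne hne with hlt | hgt
        · have := (hμd j₀ _ _ hlt).1; omega
        · have := (hμd j₀ _ _ hgt).2; omega
      have hB : ν ((finRotate f)⁻¹ j₀) ((conjW σ s j₀)⁻¹ i₀)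
          - ν ((finRotate f)⁻¹ j₀) ((conjW σ s j₀)⁻¹ k₀) ≤ M :=
        hmax (((finRotate f)⁻¹ j₀), ((conjW σ s j₀)⁻¹ i₀), ((conjW σ s j₀)⁻¹ k₀))
          (Finset.mem_univ _)
      have hkey : ((p:ℤ) - 1) * M ≤ 2 * (p:ℤ) - 3 := by
        have : (p:ℤ) * M ≤ ((p:ℤ) - 1) + ((p:ℤ) - 2) + M := by
          rw [← hMdef] at hd
          linarith
        linarith
      by_contra hM
      push_neg at hM
      have h2M : (2:ℤ) ≤ M := by omega
      have := mul_le_mul_of_nonneg_left h2M (by linarith : (0:ℤ) ≤ (p:ℤ) - 1)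
      linarith
  have hν0 : ∀ j i, ν j i = 0 := by
    intro j
    exact sum_zero_diam_le_one (ν j) (hS0 j)
      (fun i k => le_trans (hmax (j, i, k) (Finset.mem_univ _)) hM1)
  -- now μ' j i = μ j ((σ j)⁻¹ i)
  have hx' : ∀ j i, μ' j i = μ j ((σ j)⁻¹ i) := by
    intro j i
    have h := hEq j i
    rw [hν0 j i, hν0 ((finRotate f)⁻¹ j) ((conjW σ s j)⁻¹ i)] at h
    simpa using h
  -- σ = 1
  have hσ : ∀ j, σ j = 1 := by
    intro j
    have hmono : StrictMono (fun i => (σ j)⁻¹ i) := by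
      intro i k hik
      have h1 : 0 < μ' j i - μ' j k := by have := (hμ'd j i k hik).1; omega
      rw [hx' j i, hx' j k] at h1
      rcases lt_trichotomy ((σ j)⁻¹ i) ((σ j)⁻¹ k) with h | h | h
      · exact h
      · exfalso; exact absurd (by simpa using congrArg (σ j) h) (ne_of_lt hik)
      · exfalso; have := (hμd j _ _ h).1; omega
    have := perm_strictMono_eq_one ((σ j)⁻¹) hmono
    simpa using this
  constructor
  · rw [hw]
    funext j
    simp [conjW, shW, hσ]
  · funext j i
    rw [hx' j i, hσ j]
    simp

end LLLSerre
end
end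

section
/- Suppose w̃ ∈ Wtf admits a factorization w̃ = w̃₂^{−1} w′ w̃₁ with w′ ∈ Wf, w̃₁, w̃₂ ∈ Wtf⁺, and w̃₁ ↑ w̃_h^{−1} w̃₂. Then w̃ also admits a factorization w̃ = w̃₃^{−1} w″ w̃_λ with w″ ∈ Wf, w̃₃, w̃_λ ∈ Wtf⁺, w̃_λ ↑ w̃_h^{−1} w̃₃, and moreover w̃_λ · C₀ a p-restricted p-alcove. -/
/-!
Common setup: the extended affine Weyl group of `GL_n` (f-fold product), its dot
action on `(ℝ^n)^f`, p-alcoves, lengths, Bruhat orders (dominant and antidominant),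
the up (↑) order, admissible sets, and the combinatorics of lowest alcove
presentations, following Le–Le Hung–Levin, "Weight elimination in Serre-type
conjectures".
-/

noncomputable section

/-!
Let `D₁ = w̃₁ · C₀` and `D₂ = w̃₂ · C₀`. Removing from every simple gap of `D₁ + η` its integral
multiple of `p` gives a dominant `ν` with `D₁ - pν` restricted; take `w̃_λ = t_{-ν} w̃₁` and
`w̃₃ = σ t_{-w'ν} w̃₂`, with `σ ∈ Wf` sorting `D₂ - p w'ν` into the dominant chamber. The
factorization survives because `w' t_{-ν} = t_{-w'ν} w'`. Translating `w̃₁ ↑ w̃_h⁻¹ w̃₂` by `-pν`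
gives `w̃_λ · C₀ ↑ w̃_h⁻¹ · (D₂ - p w₀ν)`. On the other hand `D₂ - p w₀ν` lies ↑-above every
`σ'(D₂ - p w''ν)`: removing an ascent of the translation part costs one reflection or a pair of
parallel ones, and a weighted coordinate sum shows the process terminates. As `w̃_h⁻¹` has finite
part `w₀`, its dot action reverses ↑, which turns this into
`w̃_h⁻¹ · (D₂ - p w₀ν) ↑ w̃_h⁻¹ w̃₃ · C₀`.
-/

namespace LLLSerre

section WeylGroup

variable {n f : ℕ}

@[ext] lemma Wtf.ext {a b : Wtf n f} (hw : a.w = b.w) (ht : a.t = b.t) : a = b := by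
  cases a; cases b; cases hw; cases ht; rfl

instance : Group (Wtf n f) where
  mul := Wtf.mul
  one := ⟨1, 0⟩
  inv := Wtf.inv
  mul_assoc a b c := Wtf.ext (funext fun _ => mul_assoc _ _ _) <| by
    funext j i
    change (Wtf.mul (Wtf.mul a b) c).t j i = (Wtf.mul a (Wtf.mul b c)).t j i
    simp only [Wtf.mul, Pi.add_apply, permAct, inv_inv, mul_inv_rev, Equiv.Perm.coe_mul,
      Function.comp_apply]
    ring
  one_mul a := Wtf.ext (funext fun _ => one_mul _) <| by
    funext j i
    change (Wtf.mul ⟨1, 0⟩ a).t j i = a.t j i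
    simp [Wtf.mul, permAct]
  mul_one a := Wtf.ext (funext fun _ => mul_one _) <| by
    funext j i
    change (Wtf.mul a ⟨1, 0⟩).t j i = a.t j i
    simp [Wtf.mul, permAct]
  inv_mul_cancel a := Wtf.ext (funext fun _ => inv_mul_cancel _) <| by
    funext j i
    change (Wtf.mul (Wtf.inv a) a).t j i = 0
    simp [Wtf.mul, Wtf.inv, permAct]

lemma Wtf.mul_def (a b : Wtf n f) : Wtf.mul a b = a * b := rfl

lemma Wtf.inv_def (a : Wtf n f) : Wtf.inv a = a⁻¹ := rfl

@[simp] lemma Wtf.mul_w (a b : Wtf n f) (j : Fin f) : (a * b).w j = a.w j * b.w j := rfl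

@[simp] lemma Wtf.mul_t (a b : Wtf n f) (j : Fin f) :
    (a * b).t j = b.t j + permAct (b.w j)⁻¹ (a.t j) := rfl

@[simp] lemma Wtf.inv_t (a : Wtf n f) (j : Fin f) : a⁻¹.t j = -permAct (a.w j) (a.t j) := rfl

@[simp] lemma Wtf.one_w : (1 : Wtf n f).w = 1 := rfl

@[simp] lemma Wtf.one_t : (1 : Wtf n f).t = 0 := rfl

@[simp] lemma ofW_w (σ : WfG n f) : (ofW σ).w = σ := rfl

@[simp] lemma ofW_t (σ : WfG n f) : (ofW σ).t = 0 := rfl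

@[simp] lemma transl_w (γ : Xf n f) : (transl γ).w = 1 := rfl

@[simp] lemma transl_t (γ : Xf n f) : (transl γ).t = γ := rfl

@[simp] lemma ofW_one : ofW (1 : WfG n f) = 1 := rfl

lemma ofW_mul_ofW (σ τ : WfG n f) : ofW σ * ofW τ = ofW (σ * τ) := by
  ext j i <;> simp [permAct]

lemma ofW_mul_transl (σ : WfG n f) (γ : Xf n f) :
    ofW σ * transl γ = transl (fun j => permAct (σ j) (γ j)) * ofW σ := by
  ext j i <;> simp [permAct]

lemma transl_mul_eq_mul_transl (a : Wtf n f) (γ : Xf n f) :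
    transl γ * a = a * transl (fun j => permAct (a.w j)⁻¹ (γ j)) := by
  ext j i <;> simp [permAct, add_comm]

def Wtf.transSum (a : Wtf n f) (j : Fin f) : ℤ := ∑ i, a.t j i

lemma sum_permAct (σ : Equiv.Perm (Fin n)) (x : Fin n → ℤ) : ∑ i, permAct σ x i = ∑ i, x i :=
  Equiv.sum_comp σ⁻¹ x

@[simp] lemma Wtf.transSum_mul (a b : Wtf n f) (j : Fin f) :
    (a * b).transSum j = a.transSum j + b.transSum j := by
  simp only [Wtf.transSum, Wtf.mul_t, Pi.add_apply, Finset.sum_add_distrib, sum_permAct]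
  ring

@[simp] lemma Wtf.transSum_inv (a : Wtf n f) (j : Fin f) : a⁻¹.transSum j = -a.transSum j := by
  simp only [Wtf.transSum, Wtf.inv_t, Pi.neg_apply, Finset.sum_neg_distrib, sum_permAct]

@[simp] lemma Wtf.transSum_ofW (σ : WfG n f) (j : Fin f) : (ofW σ).transSum j = 0 := by
  simp [Wtf.transSum]

@[simp] lemma Wtf.transSum_transl (γ : Xf n f) (j : Fin f) :
    (transl γ).transSum j = ∑ i, γ j i := rfl

lemma mul_inv_mem_Waf_iff (a b : Wtf n f) :
    a * b⁻¹ ∈ Waf n f ↔ ∀ j, a.transSum j = b.transSum j := by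
  refine forall_congr' fun j => ?_
  change (a * b⁻¹).transSum j = 0 ↔ _
  rw [Wtf.transSum_mul, Wtf.transSum_inv, add_neg_eq_zero]

end WeylGroup

section DotAction

variable {n f p : ℕ}

lemma dotR_mul (a b : Wtf n f) (x : RPt n f) : dotR p (a * b) x = dotR p a (dotR p b x) := by
  funext j i
  simp only [dotR, Wtf.mul_w, Wtf.mul_t, mul_inv_rev, Equiv.Perm.coe_mul, Equiv.Perm.coe_inv,
    Function.comp_apply, Pi.add_apply, permAct, inv_inv, Equiv.apply_symm_apply, Int.cast_add]
  ring

@[simp] lemma dotR_one (x : RPt n f) : dotR p 1 x = x := by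
  funext j i
  simp [dotR]

lemma dotR_ofW_apply (σ : WfG n f) (x : RPt n f) (j : Fin f) (i : Fin n) :
    dotR p (ofW σ) x j i = x j ((σ j)⁻¹ i) + eta0 n ((σ j)⁻¹ i) - eta0 n i := by
  simp [dotR]

lemma prR_dotR_apply (a : Wtf n f) (x : RPt n f) (j : Fin f) (i k : Fin n) :
    prR (dotR p a x) j (a.w j i) (a.w j k) = prR x j i k + p * (a.t j i - a.t j k : ℤ) := by
  simp only [prR, dotR, Equiv.Perm.coe_inv, Equiv.symm_apply_apply, Int.cast_sub]
  ring

lemma prR_dotR_ofW_apply (σ : WfG n f) (x : RPt n f) (j : Fin f) (i k : Fin n) :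
    prR (dotR p (ofW σ) x) j (σ j i) (σ j k) = prR x j i k := by
  simpa using prR_dotR_apply (p := p) (ofW σ) x j i k

lemma prR_dotR_transl (γ : Xf n f) (x : RPt n f) (j : Fin f) (i k : Fin n) :
    prR (dotR p (transl γ) x) j i k = prR x j i k + p * (γ j i - γ j k : ℤ) :=
  prR_dotR_apply (transl γ) x j i k

lemma prR_swap (x : RPt n f) (j : Fin f) (i k : Fin n) : prR x j i k = -prR x j k i := by
  simp only [prR]; ring

def addRoot (c : ℝ) (j : Fin f) (i k : Fin n) (x : RPt n f) : RPt n f :=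
  fun j' i' => if j' = j then x j' i' + c * rootR i k i' else x j' i'

lemma reflPt_eq_addRoot (j : Fin f) (i k : Fin n) (m : ℤ) (x : RPt n f) :
    reflPt p j i k m x = addRoot (p * m - prR x j i k) j i k x := by
  funext j' i'
  simp only [reflPt, addRoot]
  split_ifs <;> ring

lemma addRoot_addRoot (c d : ℝ) (j : Fin f) (i k : Fin n) (x : RPt n f) :
    addRoot d j i k (addRoot c j i k x) = addRoot (c + d) j i k x := by
  funext j' i'
  simp only [addRoot]
  split_ifs <;> ring

@[simp] lemma addRoot_zero (j : Fin f) (i k : Fin n) (x : RPt n f) : addRoot 0 j i k x = x := by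
  funext j' i'
  simp [addRoot]

lemma addRoot_swap (c : ℝ) (j : Fin f) (i k : Fin n) (x : RPt n f) :
    addRoot c j i k x = addRoot (-c) j k i x := by
  funext j' i'
  simp only [addRoot, rootR]
  split_ifs <;> ring

lemma prR_addRoot_self (c : ℝ) (j : Fin f) {i k : Fin n} (hik : i ≠ k) (x : RPt n f) :
    prR (addRoot c j i k x) j i k = prR x j i k + 2 * c := by
  simp only [prR, addRoot, ↓reduceIte, rootR, hik, hik.symm, sub_zero, mul_one, zero_sub, mul_neg]
  ring

lemma dotR_addRoot (a : Wtf n f) (c : ℝ) (j : Fin f) (i k : Fin n) (x : RPt n f) :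
    dotR p a (addRoot c j i k x) = addRoot c j (a.w j i) (a.w j k) (dotR p a x) := by
  funext j' i'
  by_cases hj : j' = j
  · subst hj
    simp only [dotR, addRoot, ↓reduceIte, Equiv.Perm.coe_inv, rootR, Equiv.symm_apply_eq]
    ring
  · simp [dotR, addRoot, hj]

lemma dotR_ofW_mulSingle_swap (j : Fin f) {i k : Fin n} (hik : i ≠ k) (x : RPt n f) :
    dotR p (ofW (Pi.mulSingle j (Equiv.swap i k))) x = addRoot (-prR x j i k) j i k x := by
  funext j' i'
  by_cases hj : j' = j
  · subst hj
    rw [dotR_ofW_apply]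
    simp only [Pi.mulSingle_eq_same, Equiv.swap_inv, addRoot, if_true, rootR, prR]
    rcases eq_or_ne i' i with rfl | hi
    · simp only [Equiv.swap_apply_left, neg_sub, ↓reduceIte, hik, sub_zero, mul_one]
      ring
    rcases eq_or_ne i' k with rfl | hk
    · simp only [Equiv.swap_apply_right, neg_sub, hik.symm, ↓reduceIte, zero_sub, mul_neg, mul_one]
      ring
    · simp [Equiv.swap_apply_of_ne_of_ne hi hk, hi, hk]
  · simp [dotR_ofW_apply, addRoot, hj]

end DotAction

section Regular

variable {n f p : ℕ}

lemma regular.ne {x : RPt n f} (hx : regular p x) (j : Fin f) {i k : Fin n} (hik : i ≠ k)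
    (m : ℤ) : prR x j i k ≠ p * m := by
  rcases hik.lt_or_gt with h | h
  · exact hx j i k m h
  · rw [prR_swap]
    intro hEq
    exact hx j k i (-m) h (by push_cast; linarith)

lemma regular_basePt (hnp : n < p) : regular p (basePt n f) := by
  intro j i k m hik hEq
  have hik' : (i : ℤ) < k := by exact_mod_cast hik
  have hk : (k : ℤ) < n := by exact_mod_cast k.isLt
  have hEqZ : (k : ℤ) - i = p * m := by
    have : ((k : ℤ) - i : ℝ) = p * m := by simpa [prR, basePt, eta0] using hEq
    exact_mod_cast this
  rcases le_or_gt m 0 with hm | hm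
  · nlinarith
  · have : (p : ℤ) ≤ p * m := le_mul_of_one_le_right (by positivity) hm
    omega

lemma regular_dotR (a : Wtf n f) {x : RPt n f} (hx : regular p x) : regular p (dotR p a x) := by
  intro j i k m hik hEq
  obtain ⟨i, rfl⟩ := (a.w j).surjective i
  obtain ⟨k, rfl⟩ := (a.w j).surjective k
  rw [prR_dotR_apply] at hEq
  push_cast at hEq
  exact hx.ne j (fun h => hik.ne (congrArg _ h)) (m - (a.t j i - a.t j k)) (by push_cast; linarith)

lemma sameAlcove.symm {x y : RPt n f} (h : sameAlcove p x y) : sameAlcove p y x :=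
  ⟨h.2.1, h.1, fun j i k m hik => (h.2.2 j i k m hik).symm⟩

lemma sameAlcove.lt_iff {x y : RPt n f} (h : sameAlcove p x y) (j : Fin f) {i k : Fin n}
    (hik : i ≠ k) (m : ℤ) : prR x j i k < p * m ↔ prR y j i k < p * m := by
  rcases hik.lt_or_gt with hlt | hgt
  · exact h.2.2 j i k m hlt
  · have key : ∀ z : RPt n f, regular p z →
        (prR z j i k < p * m ↔ ¬ prR z j k i < p * (-m : ℤ)) := by
      intro z hz
      have := hz.ne j hgt.ne (-m)
      rw [prR_swap z j i k]
      push_cast at this ⊢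
      constructor
      · intro h1 h2; linarith
      · intro h1
        have := lt_of_le_of_ne (not_lt.mp h1) (Ne.symm this)
        linarith
    rw [key x h.1, key y h.2.1, h.2.2 j k i (-m) hgt]

lemma sameAlcove_dotR (a : Wtf n f) {x y : RPt n f} (h : sameAlcove p x y) :
    sameAlcove p (dotR p a x) (dotR p a y) := by
  refine ⟨regular_dotR a h.1, regular_dotR a h.2.1, fun j i k m hik => ?_⟩
  obtain ⟨i, rfl⟩ := (a.w j).surjective i
  obtain ⟨k, rfl⟩ := (a.w j).surjective k
  have key : ∀ z : RPt n f, prR (dotR p a z) j (a.w j i) (a.w j k) < p * m ↔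
      prR z j i k < p * (m - (a.t j i - a.t j k) : ℤ) := by
    intro z
    rw [prR_dotR_apply]
    push_cast
    constructor <;> intro <;> linarith
  rw [key, key]
  exact h.lt_iff j (fun h' => hik.ne (congrArg _ h')) _

end Regular

section UpOrder

variable {n f p : ℕ}

lemma upStep_addRoot {x : RPt n f} {j : Fin f} {i k : Fin n} (hik : i < k) {c : ℝ} (hc : 0 < c)
    {m : ℤ} (hm : prR x j i k + c = p * m) : upStep p x (addRoot c j i k x) := by
  refine Or.inr ⟨j, i, k, m, hik, by linarith, ?_⟩
  rw [reflPt_eq_addRoot]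
  congr 1
  linarith

lemma upStep_dotR_of_strictMono {a : Wtf n f} (ha : ∀ j, StrictMono (a.w j)) {x y : RPt n f}
    (h : upStep p x y) : upStep p (dotR p a x) (dotR p a y) := by
  rcases h with h | ⟨j, i, k, m, hik, hlt, rfl⟩
  · exact Or.inl (sameAlcove_dotR a h)
  · rw [reflPt_eq_addRoot, dotR_addRoot]
    refine upStep_addRoot (ha j hik) (by linarith) (m := m + (a.t j i - a.t j k)) ?_
    rw [prR_dotR_apply]
    push_cast
    ring

lemma upStep_dotR_of_strictAnti {a : Wtf n f} (ha : ∀ j, StrictAnti (a.w j)) {x y : RPt n f}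
    (h : upStep p x y) : upStep p (dotR p a y) (dotR p a x) := by
  rcases h with h | ⟨j, i, k, m, hik, hlt, rfl⟩
  · exact Or.inl (sameAlcove_dotR a h.symm)
  rw [reflPt_eq_addRoot]
  set c := p * m - prR x j i k
  have hx : dotR p a x = addRoot c j (a.w j k) (a.w j i) (dotR p a (addRoot c j i k x)) := by
    rw [dotR_addRoot, addRoot_swap c j (a.w j i), addRoot_addRoot, neg_add_cancel, addRoot_zero]
  conv_rhs => rw [hx]
  refine upStep_addRoot (ha j hik) (by linarith) (m := -(m + (a.t j i - a.t j k))) ?_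
  rw [prR_swap, dotR_addRoot, prR_addRoot_self _ _ ((ha j).injective.ne hik.ne), prR_dotR_apply]
  push_cast
  ring

lemma alcoveLE_dotR_of_strictMono {a : Wtf n f} (ha : ∀ j, StrictMono (a.w j)) {x y : RPt n f}
    (h : alcoveLE p x y) : alcoveLE p (dotR p a x) (dotR p a y) :=
  Relation.ReflTransGen.lift (dotR p a) (fun _ _ => upStep_dotR_of_strictMono ha) _ _ h

lemma alcoveLE_dotR_of_strictAnti {a : Wtf n f} (ha : ∀ j, StrictAnti (a.w j)) {x y : RPt n f}
    (h : alcoveLE p x y) : alcoveLE p (dotR p a y) (dotR p a x) := by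
  induction h with
  | refl => exact .refl
  | tail _ hstep ih => exact .head (upStep_dotR_of_strictAnti ha hstep) ih

lemma alcoveLE_dotR_transl (γ : Xf n f) {x y : RPt n f} (h : alcoveLE p x y) :
    alcoveLE p (dotR p (transl γ) x) (dotR p (transl γ) y) :=
  alcoveLE_dotR_of_strictMono (fun _ => strictMono_id) h

lemma sub_mul_floor_div_mem_Ioo {q r : ℝ} (hq : 0 < q) (hr : ∀ m : ℤ, r ≠ q * m) :
    0 < r - q * ⌊r / q⌋ ∧ r - q * ⌊r / q⌋ < q := by
  have h1 := Int.sub_floor_div_mul_nonneg r hq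
  have h2 := Int.sub_floor_div_mul_lt r hq
  refine ⟨lt_of_le_of_ne (by linarith) fun h => hr ⌊r / q⌋ (by linarith), by linarith⟩

/-- The reflections in two parallel walls `p δ` apart compose to the translation by `p δ α_{ik}`. -/
lemma alcoveLE_addRoot (hp : 0 < p) {x : RPt n f} {j : Fin f} {i k : Fin n} (hik : i < k)
    {δ : ℤ} (hδ : 1 ≤ δ) (hx : ∀ m : ℤ, prR x j i k ≠ p * m) :
    alcoveLE p x (addRoot (p * δ) j i k x) := by
  have hp' : (0 : ℝ) < p := by exact_mod_cast hp
  have hδ' : (1 : ℝ) ≤ δ := by exact_mod_cast hδ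
  obtain ⟨m, h1, h2⟩ : ∃ m : ℤ, 0 < prR x j i k - p * m ∧ prR x j i k - p * m < p :=
    ⟨_, sub_mul_floor_div_mem_Ioo hp' hx⟩
  obtain ⟨c, hc⟩ : ∃ c : ℝ, c = p * (m + 1 : ℤ) - prR x j i k := ⟨_, rfl⟩
  push_cast at hc
  have step1 : upStep p x (addRoot c j i k x) :=
    upStep_addRoot hik (by linarith) (m := m + 1) (by push_cast; linarith)
  have step2 : upStep p (addRoot c j i k x) (addRoot (p * δ - c) j i k (addRoot c j i k x)) := by
    refine upStep_addRoot hik (by nlinarith) (m := m + 1 + δ) ?_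
    rw [prR_addRoot_self _ _ hik.ne]
    push_cast
    linarith
  rw [addRoot_addRoot, add_sub_cancel] at step2
  exact .head step1 (.single step2)

end UpOrder

section Sorting

variable {n f p : ℕ}

/-- Adding a positive multiple of a positive root lowers it, so it decreases along the steps
that sort a point into the dominant chamber. -/
def potential (x : RPt n f) : ℝ := ∑ j, ∑ i : Fin n, ((i : ℕ) : ℝ) * x j i

lemma potential_addRoot (c : ℝ) (j : Fin f) (i k : Fin n) (x : RPt n f) :
    potential (addRoot c j i k x) = potential x + c * (((i : ℕ) : ℝ) - (k : ℕ)) := by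
  have hslot : ∀ j' (i' : Fin n), ((i' : ℕ) : ℝ) * addRoot c j i k x j' i'
      = ((i' : ℕ) : ℝ) * x j' i' + if j' = j then c * (((i' : ℕ) : ℝ) * rootR i k i') else 0 := by
    intro j' i'
    simp only [addRoot]
    split_ifs <;> ring
  simp only [potential, hslot, Finset.sum_add_distrib]
  simp [rootR, mul_sub, Finset.sum_sub_distrib]

lemma wellFounded_lt_of_finite {ι α : Type*} [Finite ι] [Preorder α] (Φ : ι → α) :
    WellFounded fun a b => Φ a < Φ b :=
  @Finite.wellFounded_of_trans_of_irrefl _ _ _ ⟨fun _ _ _ => lt_trans⟩ ⟨fun _ => lt_irrefl _⟩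

/-- Reflect repeatedly in a wall through the origin that separates the point from the dominant
chamber. -/
lemma exists_alcoveLE_dominantPt {x : RPt n f} (hx : regular p x) :
    ∃ σ : WfG n f, alcoveLE p x (dotR p (ofW σ) x) ∧ dominantPt (dotR p (ofW σ) x) := by
  suffices h : ∀ τ : WfG n f, ∃ σ : WfG n f,
      alcoveLE p (dotR p (ofW τ) x) (dotR p (ofW σ) x) ∧ dominantPt (dotR p (ofW σ) x) by
    simpa using h 1
  intro τ
  induction τ using (wellFounded_lt_of_finite fun τ => potential (dotR p (ofW τ) x)).induction
    with | _ τ ih => ?_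
  by_cases hdom : dominantPt (dotR p (ofW τ) x)
  · exact ⟨τ, .refl, hdom⟩
  obtain ⟨j, i, k, hik, hneg⟩ : ∃ j i k, i < k ∧ prR (dotR p (ofW τ) x) j i k < 0 := by
    simp only [dominantPt, not_forall, not_lt] at hdom
    obtain ⟨j, i, k, hik, hle⟩ := hdom
    exact ⟨j, i, k, hik, lt_of_le_of_ne hle (by simpa using (regular_dotR _ hx).ne j hik.ne 0)⟩
  have hswap : dotR p (ofW (Pi.mulSingle j (Equiv.swap i k) * τ)) x
      = addRoot (-prR (dotR p (ofW τ) x) j i k) j i k (dotR p (ofW τ) x) := by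
    rw [← ofW_mul_ofW, dotR_mul, dotR_ofW_mulSingle_swap j hik.ne]
  have hik' : ((i : ℕ) : ℝ) < (k : ℕ) := by exact_mod_cast hik
  obtain ⟨σ, hle, hσ⟩ := ih _ (by rw [hswap, potential_addRoot]; nlinarith)
  rw [hswap] at hle
  exact ⟨σ, .head (upStep_addRoot hik (by linarith) (m := 0) (by simp)) hle, hσ⟩

lemma dotR_ofW_eq_self_of_dominantPt {z : RPt n f} (σ : WfG n f) (hz : dominantPt z)
    (hσz : dominantPt (dotR p (ofW σ) z)) : dotR p (ofW σ) z = z := by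
  funext j i
  let g : Fin n → ℝ := fun i => z j i + eta0 n i
  have hg : StrictAnti g := fun a b hab => by
    have := hz j a b hab
    simp only [prR] at this
    simp only [g]
    linarith
  have hgσ : StrictAnti (g ∘ ⇑(σ j)⁻¹) := fun a b hab => by
    have := hσz j a b hab
    simp only [prR, dotR_ofW_apply] at this
    simp only [g, Function.comp]
    linarith
  have := congrFun (Tuple.unique_antitone (τ := 1) hgσ.antitone hg.antitone) i
  simp only [g, Function.comp, Equiv.Perm.coe_one, id] at this
  rw [dotR_ofW_apply]
  linarith

lemma alcoveLE_of_dominantPt {y : RPt n f} (hy : dominantPt y) (hreg : regular p y)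
    (σ : WfG n f) : alcoveLE p (dotR p (ofW σ) y) y := by
  obtain ⟨κ, hle, hdom⟩ := exists_alcoveLE_dominantPt (regular_dotR (ofW σ) hreg)
  rw [← dotR_mul, ofW_mul_ofW] at hle hdom
  rwa [dotR_ofW_eq_self_of_dominantPt _ hy hdom] at hle

end Sorting

section TopOfOrbit

variable {n f p : ℕ}

lemma permAct_mul {α : Type*} (σ τ : Equiv.Perm (Fin n)) (x : Fin n → α) :
    permAct (σ * τ) x = permAct σ (permAct τ x) := rfl

lemma dominantPt_dotR_transl {D : RPt n f} (hD : dominantPt D) {lam : Xf n f}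
    (hlam : ∀ j, Antitone (lam j)) : dominantPt (dotR p (transl lam) D) := by
  intro j i k hik
  rw [prR_dotR_transl]
  have : (0 : ℝ) ≤ (lam j i - lam j k : ℤ) := by exact_mod_cast sub_nonneg.mpr (hlam j hik.le)
  have := hD j i k hik
  positivity

lemma dotR_transl_permAct_mulSingle_swap (μ : Xf n f) (j : Fin f) {a b : Fin n} (hab : a ≠ b)
    (x : RPt n f) :
    dotR p (transl fun j' => permAct ((Pi.mulSingle j (Equiv.swap a b) : WfG n f) j') (μ j')) x
      = addRoot (p * (μ j b - μ j a : ℤ)) j a b (dotR p (transl μ) x) := by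
  funext j' i'
  by_cases hj : j' = j
  · subst hj
    simp only [dotR, addRoot, rootR, permAct, transl_w, transl_t, Pi.mulSingle_eq_same,
      Equiv.swap_inv, Pi.one_apply, inv_one, Equiv.Perm.coe_one, id, if_true]
    rcases eq_or_ne i' a with rfl | ha
    · simp only [Equiv.swap_apply_left, Int.cast_sub, ↓reduceIte, hab, sub_zero, mul_one]
      ring
    rcases eq_or_ne i' b with rfl | hb
    · simp only [Equiv.swap_apply_right, Int.cast_sub, hab.symm, ↓reduceIte, zero_sub, mul_neg,
        mul_one]
      ring
    · simp [Equiv.swap_apply_of_ne_of_ne ha hb, ha, hb]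
  · simp [dotR, addRoot, permAct, hj]

lemma exists_alcoveLE_ofW_addRoot (hp : 0 < p) {y : RPt n f} (hy : regular p y) {j : Fin f}
    {a b : Fin n} (hab : a < b) {δ : ℤ} (hδ : 1 ≤ δ) (hpos : 0 < prR y j a b + p * δ)
    (σ : WfG n f) :
    ∃ σ' : WfG n f, alcoveLE p (dotR p (ofW σ) y) (dotR p (ofW σ') (addRoot (p * δ) j a b y)) := by
  rcases ((σ j).injective.ne hab.ne).lt_or_gt with hlt | hgt
  · refine ⟨σ, ?_⟩
    rw [dotR_addRoot]
    exact alcoveLE_addRoot hp hlt hδ ((regular_dotR _ hy).ne j hlt.ne)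
  -- when `σ` reverses `a` and `b`, a single reflection reaches `σ s_{ab}` of the translate
  refine ⟨σ * Pi.mulSingle j (Equiv.swap a b), .single ?_⟩
  have key : dotR p (ofW (σ * Pi.mulSingle j (Equiv.swap a b))) (addRoot (p * δ) j a b y)
      = addRoot (prR y j a b + p * δ) j (σ j b) (σ j a) (dotR p (ofW σ) y) := by
    rw [← ofW_mul_ofW, dotR_mul, dotR_ofW_mulSingle_swap j hab.ne, prR_addRoot_self _ _ hab.ne,
      addRoot_addRoot, dotR_addRoot, addRoot_swap]
    simp only [ofW_w]
    congr 1
    ring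
  rw [key]
  refine upStep_addRoot hgt hpos (m := δ) ?_
  rw [prR_swap, prR_dotR_ofW_apply]
  ring

theorem alcoveLE_ofW_transl_permAct (hp : 0 < p) {D : RPt n f} (hD : dominantPt D)
    (hDreg : regular p D) {lam : Xf n f} (hlam : ∀ j, Antitone (lam j)) (ρ σ : WfG n f) :
    alcoveLE p (dotR p (ofW σ) (dotR p (transl fun j => permAct (ρ j) (lam j)) D))
      (dotR p (transl lam) D) := by
  induction ρ using (wellFounded_lt_of_finite fun ρ : WfG n f =>
    potential (dotR p (transl fun j => permAct (ρ j) (lam j)) D)).induction generalizing σ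
    with | _ ρ ih => ?_
  by_cases hanti : ∀ j, Antitone (permAct (ρ j) (lam j))
  · have hρ : (fun j => permAct (ρ j) (lam j)) = lam :=
      funext fun j => Tuple.unique_antitone (τ := 1) (hanti j) (hlam j)
    rw [hρ]
    exact alcoveLE_of_dominantPt (dominantPt_dotR_transl hD hlam) (regular_dotR _ hDreg) σ
  obtain ⟨j, a, b, hab, hlt⟩ :
      ∃ j a b, a < b ∧ permAct (ρ j) (lam j) a < permAct (ρ j) (lam j) b := by
    simp only [not_forall, Antitone, not_le] at hanti
    obtain ⟨j, a, b, hab, hlt⟩ := hanti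
    exact ⟨j, a, b, lt_of_le_of_ne hab (by rintro rfl; exact lt_irrefl _ hlt), hlt⟩
  set μ : Xf n f := fun j => permAct (ρ j) (lam j)
  have hswap : dotR p (transl fun j' =>
        permAct ((Pi.mulSingle j (Equiv.swap a b) * ρ : WfG n f) j') (lam j')) D
      = addRoot (p * (μ j b - μ j a : ℤ)) j a b (dotR p (transl μ) D) := by
    simp only [Pi.mul_apply, permAct_mul]
    exact dotR_transl_permAct_mulSingle_swap μ j hab.ne D
  have hδ : 1 ≤ μ j b - μ j a := by simp only [μ]; omega
  obtain ⟨σ', hσ'⟩ := exists_alcoveLE_ofW_addRoot hp (regular_dotR _ hDreg) hab hδ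
    (by rw [prR_dotR_transl]; push_cast; linarith [hD j a b hab]) σ
  have hab' : ((a : ℕ) : ℝ) < (b : ℕ) := by exact_mod_cast hab
  have hδ' : (0 : ℝ) < (μ j b - μ j a : ℤ) := by exact_mod_cast hδ
  have hp' : (0 : ℝ) < p := by exact_mod_cast hp
  rw [← hswap] at hσ'
  refine hσ'.trans (ih _ ?_ σ')
  rw [hswap, potential_addRoot]
  nlinarith [mul_pos (mul_pos hp' hδ') (sub_pos.mpr hab')]

/-- Since `t_{-ν} w̃_h⁻¹ = w̃_h⁻¹ t_{-w₀ν}` and `w̃_h⁻¹` reverses `↑`, this is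
`alcoveLE_ofW_transl_permAct` for the dominant weight `-w₀ν`. -/
lemma alcoveLE_transl_whElt_inv (hp : 0 < p) {D : RPt n f} (hD : dominantPt D)
    (hDreg : regular p D) {ν : Xf n f} (hν : ∀ j, Antitone (ν j)) (w' σ : WfG n f) :
    alcoveLE p (dotR p (transl (-ν) * (whElt n f)⁻¹) D)
      (dotR p ((whElt n f)⁻¹ * (ofW σ * transl fun j => permAct (w' j) ((-ν) j))) D) := by
  have hlam : ∀ j, Antitone fun i => -ν j (Fin.rev i) :=
    fun j _ _ hik => neg_le_neg (hν j (Fin.rev_le_rev.2 hik))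
  have hperm : (fun j => permAct (w' j) ((-ν) j))
      = fun j => permAct (w' j * Fin.revPerm) fun i => -ν j (Fin.rev i) := by
    funext j i
    simp [permAct]
  rw [transl_mul_eq_mul_transl, hperm, dotR_mul, dotR_mul, dotR_mul]
  exact alcoveLE_dotR_of_strictAnti (fun _ => Fin.rev_strictAnti)
    (alcoveLE_ofW_transl_permAct hp hD hDreg hlam _ σ)

end TopOfOrbit

section Restricted

variable {n f p : ℕ}

lemma strictAnti_of_adjacent {α : Type*} [Preorder α] {g : Fin n → α}
    (h : ∀ (i : Fin n) (hi : (i : ℕ) + 1 < n), g ⟨i + 1, hi⟩ < g i) : StrictAnti g := by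
  cases n with
  | zero => exact fun a => a.elim0
  | succ m => exact Fin.strictAnti_iff_succ_lt.2 fun i => h i.castSucc (by simp)

lemma antitone_of_adjacent {α : Type*} [Preorder α] {g : Fin n → α}
    (h : ∀ (i : Fin n) (hi : (i : ℕ) + 1 < n), g ⟨i + 1, hi⟩ ≤ g i) : Antitone g := by
  cases n with
  | zero => exact fun a => a.elim0
  | succ m => exact Fin.antitone_iff_succ_le.2 fun i => h i.castSucc (by simp)

/-- `ν i` sums the integer parts of the gaps of `y / q` from `i` on, so that `y - q ν` keeps only
their fractional parts. -/
lemma exists_antitone_sub_mul_gaps_mem_Ioo {q : ℝ} (hq : 0 < q) {y : Fin n → ℝ}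
    (hy : StrictAnti y)
    (hreg : ∀ (i : Fin n) (hi : (i : ℕ) + 1 < n) (m : ℤ), y i - y ⟨i + 1, hi⟩ ≠ q * m) :
    ∃ ν : Fin n → ℤ, Antitone ν ∧ ∀ (i : Fin n) (hi : (i : ℕ) + 1 < n),
      0 < (y i - q * ν i) - (y ⟨i + 1, hi⟩ - q * ν ⟨i + 1, hi⟩) ∧
        (y i - q * ν i) - (y ⟨i + 1, hi⟩ - q * ν ⟨i + 1, hi⟩) < q := by
  let Y : ℕ → ℝ := fun l => if h : l < n then y ⟨l, h⟩ else 0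
  let ν : Fin n → ℤ := fun i => ∑ l ∈ Finset.Ico (i : ℕ) (n - 1), ⌊(Y l - Y (l + 1)) / q⌋
  have hgap : ∀ (i : Fin n) (hi : (i : ℕ) + 1 < n),
      ν i - ν ⟨i + 1, hi⟩ = ⌊(y i - y ⟨i + 1, hi⟩) / q⌋ := by
    intro i hi
    simp only [ν]
    rw [Finset.sum_eq_sum_Ico_succ_bot (by omega)]
    simp [Y, hi]
  refine ⟨ν, antitone_of_adjacent fun i hi => ?_, fun i hi => ?_⟩
  · have hlt : y ⟨i + 1, hi⟩ < y i := hy (Fin.lt_def.2 (Nat.lt_succ_self _))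
    have := Int.floor_nonneg.2 (div_nonneg (sub_nonneg.2 hlt.le) hq.le)
    have := hgap i hi
    omega
  · have hcast : q * ν i - q * ν ⟨i + 1, hi⟩ = q * (ν i - ν ⟨i + 1, hi⟩ : ℤ) := by push_cast; ring
    obtain ⟨h1, h2⟩ := sub_mul_floor_div_mem_Ioo hq (hreg i hi)
    rw [← hgap] at h1 h2
    constructor <;> linarith

lemma exists_transl_restricted (hp : 0 < p) {D : RPt n f} (hD : dominantPt D)
    (hDreg : regular p D) :
    ∃ ν : Xf n f, (∀ j, Antitone (ν j)) ∧ dominantPt (dotR p (transl (-ν)) D) ∧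
      restrictedPt p (dotR p (transl (-ν)) D) := by
  have hp' : (0 : ℝ) < p := by exact_mod_cast hp
  have hy : ∀ j, StrictAnti fun i => D j i + eta0 n i := fun j a b hab => by
    have := hD j a b hab
    simp only [prR] at this
    linarith
  choose ν hν hgaps using fun j => exists_antitone_sub_mul_gaps_mem_Ioo hp' (hy j)
    (fun i _ m => hDreg.ne j (by simp [Fin.ext_iff]) m)
  have hpr : ∀ j i k, prR (dotR p (transl (-ν)) D) j i k
      = (D j i + eta0 n i - p * ν j i) - (D j k + eta0 n k - p * ν j k) := by
    intro j i k
    rw [prR_dotR_transl]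
    simp only [prR, Pi.neg_apply]
    push_cast
    ring
  refine ⟨ν, hν, fun j i k hik => ?_, fun j i hi => ?_⟩
  · have := strictAnti_of_adjacent (g := fun i => D j i + eta0 n i - p * ν j i)
      (fun i hi => by linarith [(hgaps j i hi).1]) hik
    rw [hpr]
    linarith
  · rw [hpr]
    exact hgaps j i hi

end Restricted

theorem statement12_general (n f p : ℕ) (hnp : n < p)
    (a : Wtf n f) (w' : WfG n f) (w1 w2 : Wtf n f)
    (h1 : w1 ∈ WtfPlus n f p) (h2 : w2 ∈ WtfPlus n f p)
    (hup : upOrd p w1 (Wtf.mul (Wtf.inv (whElt n f)) w2))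
    (hfact : a = Wtf.mul (Wtf.inv w2) (Wtf.mul (ofW w') w1)) :
    ∃ (w'' : WfG n f) (wl w3 : Wtf n f),
      wl ∈ WtfPlus n f p ∧ w3 ∈ WtfPlus n f p ∧
      upOrd p wl (Wtf.mul (Wtf.inv (whElt n f)) w3) ∧
      a = Wtf.mul (Wtf.inv w3) (Wtf.mul (ofW w'') wl) ∧
      restrictedPt p (dotR p wl (basePt n f)) := by
  simp only [Wtf.mul_def, Wtf.inv_def, upOrd, WtfPlus, Set.mem_ofPred_eq] at h1 h2 hup hfact ⊢
  have hp : 0 < p := by omega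
  have hreg : regular p (basePt n f) := regular_basePt hnp
  obtain ⟨ν, hν, hXdom, hXres⟩ := exists_transl_restricted hp h1 (regular_dotR w1 hreg)
  set μ : Xf n f := fun j => permAct (w' j) ((-ν) j)
  obtain ⟨σ, -, hσ⟩ := exists_alcoveLE_dominantPt (regular_dotR (transl μ * w2) hreg)
  refine ⟨σ * w', transl (-ν) * w1, ofW σ * (transl μ * w2), by rwa [dotR_mul], by rwa [dotR_mul],
    ⟨?_, ?_⟩, ?_, by rwa [dotR_mul]⟩
  · have hlow := alcoveLE_dotR_transl (-ν) hup.1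
    have htop := alcoveLE_transl_whElt_inv hp h2 (regular_dotR w2 hreg) hν w' σ
    simp only [dotR_mul] at hlow htop ⊢
    exact hlow.trans htop
  · rw [mul_inv_mem_Waf_iff] at hup ⊢
    intro j
    simp [μ, sum_permAct] at hup ⊢
    linarith [hup.2 j]
  · rw [hfact, ← ofW_mul_ofW, mul_assoc (ofW σ), ← mul_assoc (ofW w'), ofW_mul_transl]
    simp only [μ]
    group

/-- if `w̃ = w̃₂⁻¹ w' w̃₁` with `w' ∈ Wf`, `w̃₁, w̃₂ ∈ Wtf⁺` and
`w̃₁ ↑ w̃_h⁻¹ w̃₂`, then `w̃` admits such a factorization `w̃ = w̃₃⁻¹ w'' w̃_λ`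
in which moreover `w̃_λ · C₀` is p-restricted. -/
theorem statement12 (n f p : ℕ) (hn : 2 ≤ n) (hf : 1 ≤ f) (hp : p.Prime) (hnp : n < p)
    (a : Wtf n f) (w' : WfG n f) (w1 w2 : Wtf n f)
    (h1 : w1 ∈ WtfPlus n f p) (h2 : w2 ∈ WtfPlus n f p)
    (hup : upOrd p w1 (Wtf.mul (Wtf.inv (whElt n f)) w2))
    (hfact : a = Wtf.mul (Wtf.inv w2) (Wtf.mul (ofW w') w1)) :
    ∃ (w'' : WfG n f) (wl w3 : Wtf n f),
      wl ∈ WtfPlus n f p ∧ w3 ∈ WtfPlus n f p ∧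
      upOrd p wl (Wtf.mul (Wtf.inv (whElt n f)) w3) ∧
      a = Wtf.mul (Wtf.inv w3) (Wtf.mul (ofW w'') wl) ∧
      restrictedPt p (dotR p wl (basePt n f)) :=
  statement12_general n f p hnp a w' w1 w2 h1 h2 hup hfact

end LLLSerre
end
end

section
/- Let μ ∈ Xf be 2n-deep in C₀, λ ∈ X₁ (p-restricted), s ∈ Wf, and ν ∈ Xf. If μ + pν − s·π(ν) + η lies in the convex hull in (R^n)^f of the Wf-orbit of w̃_h · λ + η, then |⟨ν_j, α^∨⟩| ≤ n − 1 for all 0 ≤ j < f and all coroots α^∨. -/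
/-!
Common setup: the extended affine Weyl group of `GL_n` (f-fold product), its dot
action on `(ℝ^n)^f`, p-alcoves, lengths, Bruhat orders (dominant and antidominant),
the up (↑) order, admissible sets, and the combinatorics of lowest alcove
presentations, following Le–Le Hung–Levin, "Weight elimination in Serre-type
conjectures".
-/

noncomputable section

namespace LLLSerre

private lemma lamDiff {n f p : ℕ} {lam : Xf n f} (hlam : lam ∈ X1 n f p) (j : Fin f) :
    ∀ (d : ℕ) (a b : Fin n), (b : ℕ) = (a : ℕ) + d →
      0 ≤ lam j a - lam j b ∧ lam j a - lam j b ≤ (d : ℤ) * ((p : ℤ) - 1) := by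
  intro d
  induction d with
  | zero =>
    intro a b hab
    have : a = b := Fin.ext (by omega)
    subst this; simp
  | succ d ih =>
    intro a b hab
    have hcb : (a : ℕ) + d < n := by have := b.isLt; omega
    have h1 := ih a ⟨(a : ℕ) + d, hcb⟩ rfl
    have h2 : ((⟨(a : ℕ) + d, hcb⟩ : Fin n) : ℕ) + 1 < n := by
      have := b.isLt; simpa using by omega
    have h3 := hlam j ⟨(a : ℕ) + d, hcb⟩ h2
    have hb : (⟨((⟨(a : ℕ) + d, hcb⟩ : Fin n) : ℕ) + 1, h2⟩ : Fin n) = b := Fin.ext (by simp; omega)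
    rw [hb] at h3
    push_cast
    constructor
    · linarith [h1.1, h3.1]
    · nlinarith [h1.2, h3.2]

private lemma Yval {n f p : ℕ} (lam : Xf n f) (j : Fin f) (i : Fin n) :
    (dotZ p (whElt n f) lam + etaf n f) j i = lam j i.rev + (1 - (p : ℤ)) * (i : ℤ) := by
  have hlt := i.isLt
  have hrev : ((i.rev : ℕ) : ℤ) = (n : ℤ) - 1 - (i : ℤ) := by
    have h2 : (i.rev : ℕ) = n - ((i : ℕ) + 1) := Fin.val_rev i
    omega
  have hinv : ∀ m : Fin n, ((Fin.revPerm : Equiv.Perm (Fin n))⁻¹ m) = m.rev := fun _ => rfl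
  simp only [Pi.add_apply, dotZ, whElt, etaf, eta0, w0f, hinv, hrev]
  ring

private lemma Ymono {n f p : ℕ} (hp : 1 ≤ p) {lam : Xf n f} (hlam : lam ∈ X1 n f p)
    (j : Fin f) (m m' : Fin n) (hmm : (m : ℕ) ≤ (m' : ℕ)) :
    0 ≤ (dotZ p (whElt n f) lam + etaf n f) j m - (dotZ p (whElt n f) lam + etaf n f) j m' ∧
    (dotZ p (whElt n f) lam + etaf n f) j m - (dotZ p (whElt n f) lam + etaf n f) j m'
      ≤ ((n : ℤ) - 1) * ((p : ℤ) - 1) := by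
  rw [Yval, Yval]
  have hmlt := m.isLt
  have hmlt' := m'.isLt
  have hd := lamDiff hlam j ((m' : ℕ) - (m : ℕ)) m'.rev m.rev (by
    have e1 : (m.rev : ℕ) = n - ((m : ℕ) + 1) := Fin.val_rev m
    have e2 : (m'.rev : ℕ) = n - ((m' : ℕ) + 1) := Fin.val_rev m'
    omega)
  have hdz : ((((m' : ℕ) - (m : ℕ)) : ℕ) : ℤ) = (m' : ℤ) - (m : ℤ) := by omega
  rw [hdz] at hd
  have hd2 : (m' : ℤ) - (m : ℤ) ≤ (n : ℤ) - 1 := by omega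
  have hp' : (0 : ℤ) ≤ (p : ℤ) - 1 := by omega
  constructor
  · nlinarith [hd.1, hd.2]
  · nlinarith [hd.1, hd.2, mul_le_mul_of_nonneg_right hd2 hp']

private lemma hullBound {n f p : ℕ} (hn : 2 ≤ n) (hp : 1 ≤ p) {lam : Xf n f}
    (hlam : lam ∈ X1 n f p) {X : Xf n f}
    (h : toR X ∈ convexHull ℝ (orbitR (toR (dotZ p (whElt n f) lam + etaf n f))))
    (j : Fin f) (i k : Fin n) :
    X j i - X j k ≤ ((n : ℤ) - 1) * ((p : ℤ) - 1) := by
  set Y := dotZ p (whElt n f) lam + etaf n f with hY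
  have hne : (Finset.univ : Finset (Fin n)).Nonempty := ⟨⟨0, by omega⟩, Finset.mem_univ _⟩
  set Mx := Finset.sup' Finset.univ hne (Y j) with hMx
  set mn := Finset.inf' Finset.univ hne (Y j) with hmn
  set C : Set (RPt n f) :=
    {z | ∀ i' : Fin n, ((mn : ℤ) : ℝ) ≤ z j i' ∧ z j i' ≤ ((Mx : ℤ) : ℝ)} with hC
  have hsub : orbitR (toR Y) ⊆ C := by
    rintro _ ⟨σ, rfl⟩
    intro i'
    constructor
    · exact Int.cast_le.mpr (Finset.inf'_le _ (Finset.mem_univ ((σ j)⁻¹ i')))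
    · exact Int.cast_le.mpr (Finset.le_sup' _ (Finset.mem_univ ((σ j)⁻¹ i')))
  have hconv : Convex ℝ C := by
    intro z hz w hw a b ha hb hab
    intro i'
    have h1 := hz i'
    have h2 := hw i'
    have he : (a • z + b • w) j i' = a * z j i' + b * w j i' := rfl
    rw [he]
    have l1 : a * ((mn : ℤ) : ℝ) ≤ a * z j i' := mul_le_mul_of_nonneg_left h1.1 ha
    have l2 : b * ((mn : ℤ) : ℝ) ≤ b * w j i' := mul_le_mul_of_nonneg_left h2.1 hb
    have l3 : a * z j i' ≤ a * ((Mx : ℤ) : ℝ) := mul_le_mul_of_nonneg_left h1.2 ha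
    have l4 : b * w j i' ≤ b * ((Mx : ℤ) : ℝ) := mul_le_mul_of_nonneg_left h2.2 hb
    have e1 : a * ((mn : ℤ) : ℝ) + b * ((mn : ℤ) : ℝ) = ((mn : ℤ) : ℝ) := by
      rw [← add_mul, hab, one_mul]
    have e2 : a * ((Mx : ℤ) : ℝ) + b * ((Mx : ℤ) : ℝ) = ((Mx : ℤ) : ℝ) := by
      rw [← add_mul, hab, one_mul]
    constructor
    · linarith
    · linarith
  have hmem : toR X ∈ C := convexHull_min hsub hconv h
  have hxi : X j i ≤ Mx := by
    have h1 : ((X j i : ℤ) : ℝ) ≤ ((Mx : ℤ) : ℝ) := (hmem i).2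
    exact_mod_cast h1
  have hxk : mn ≤ X j k := by
    have h1 : ((mn : ℤ) : ℝ) ≤ ((X j k : ℤ) : ℝ) := (hmem k).1
    exact_mod_cast h1
  obtain ⟨m0, -, hm0⟩ := Finset.exists_mem_eq_sup' hne (Y j)
  obtain ⟨m1, -, hm1⟩ := Finset.exists_mem_eq_inf' hne (Y j)
  have hspread : Mx - mn ≤ ((n : ℤ) - 1) * ((p : ℤ) - 1) := by
    rw [hMx, hmn, hm0, hm1]
    rcases le_total ((m0 : ℕ)) ((m1 : ℕ)) with hc | hc
    · have hmono := Ymono hp hlam j m0 m1 hc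
      exact hmono.2
    · have hmono := Ymono hp hlam j m1 m0 hc
      have hnn : (0 : ℤ) ≤ ((n : ℤ) - 1) * ((p : ℤ) - 1) := by
        have h1 : (0 : ℤ) ≤ (n : ℤ) - 1 := by omega
        have h2 : (0 : ℤ) ≤ (p : ℤ) - 1 := by omega
        positivity
      linarith [hmono.1]
  linarith

/-- let `μ` be 2n-deep in `C₀`, `λ ∈ X₁`, `s ∈ Wf`, `ν ∈ Xf`. If
`μ + pν − s·π(ν) + η` lies in the convex hull of the `Wf`-orbit of `w̃_h · λ + η`,
then `|⟨ν_j, α^∨⟩| ≤ n − 1` for all `j` and all coroots `α^∨`. -/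
theorem statement15 (n f p : ℕ) (hn : 2 ≤ n) (hf : 1 ≤ f) (hp : p.Prime) (hnp : n < p)
    (μ : Xf n f) (hμ : deep p (2 * n) μ) (lam : Xf n f) (hlam : lam ∈ X1 n f p)
    (s : WfG n f) (ν : Xf n f)
    (h : toR (fun j i => μ j i + (p : ℤ) * ν j i - permAct (s j) (sh ν j) i + eta0 n i)
        ∈ convexHull ℝ (orbitR (toR (dotZ p (whElt n f) lam + etaf n f)))) :
    ∀ (j : Fin f) (i k : Fin n), i ≠ k → |ν j i - ν j k| ≤ (n : ℤ) - 1 := by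
  have hp1 : 1 ≤ p := hp.one_lt.le
  set X : Xf n f := fun j i => μ j i + (p : ℤ) * ν j i - permAct (s j) (sh ν j) i + eta0 n i
    with hXdef
  have hne : (Finset.univ : Finset (Fin f × Fin n × Fin n)).Nonempty :=
    ⟨⟨⟨0, hf⟩, ⟨0, by omega⟩, ⟨0, by omega⟩⟩, Finset.mem_univ _⟩
  set B := Finset.sup' Finset.univ hne
    (fun q : Fin f × Fin n × Fin n => |ν q.1 q.2.1 - ν q.1 q.2.2|) with hBdef
  have hBle : ∀ (j : Fin f) (i k : Fin n), |ν j i - ν j k| ≤ B := by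
    intro j i k
    rw [hBdef]
    exact Finset.le_sup' (fun q : Fin f × Fin n × Fin n => |ν q.1 q.2.1 - ν q.1 q.2.2|)
      (Finset.mem_univ (j, i, k))
  suffices hfin : B ≤ (n : ℤ) - 1 by
    intro j i k _
    exact le_trans (hBle j i k) hfin
  obtain ⟨⟨j, i, k⟩, -, hq⟩ := Finset.exists_mem_eq_sup' hne
    (fun q : Fin f × Fin n × Fin n => |ν q.1 q.2.1 - ν q.1 q.2.2|)
  rw [← hBdef] at hq
  clear_value X B
  by_cases hik : i = k
  · subst hik
    simp only [sub_self, abs_zero] at hq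
    rw [hq]; omega
  -- bounds from the convex hull
  have hub := hullBound hn hp1 hlam h j i k
  have hlb := hullBound hn hp1 hlam h j k i
  -- bounds from deepness of μ
  have hprZ : prZ μ j k i = -prZ μ j i k := by simp only [prZ]; ring
  have hcb : (2 * (n : ℤ) < prZ μ j i k ∧ prZ μ j i k < (p : ℤ) - 2 * n) ∨
      (2 * (n : ℤ) < -prZ μ j i k ∧ -prZ μ j i k < (p : ℤ) - 2 * n) := by
    rcases lt_or_gt_of_ne hik with hlt | hgt
    · left
      have := hμ j i k hlt
      push_cast at this
      exact ⟨by linarith [this.1], by linarith [this.2]⟩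
    · right
      have := hμ j k i hgt
      rw [hprZ] at this
      push_cast at this
      exact ⟨by linarith [this.1], by linarith [this.2]⟩
  -- the identity
  have hid : X j i - X j k = prZ μ j i k + (p : ℤ) * (ν j i - ν j k)
      - (ν ((finRotate f)⁻¹ j) ((s j)⁻¹ i) - ν ((finRotate f)⁻¹ j) ((s j)⁻¹ k)) := by
    simp only [hXdef, permAct, sh, prZ]
    ring
  have hD := abs_le.mp (hBle ((finRotate f)⁻¹ j) ((s j)⁻¹ i) ((s j)⁻¹ k))
  have hA : ν j i - ν j k = B ∨ ν j i - ν j k = -B := by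
    rcases abs_cases (ν j i - ν j k) with ⟨h1, -⟩ | ⟨h1, -⟩
    · left; rw [hq, h1]
    · right; rw [hq, h1]; ring
  have hp0 : (0 : ℤ) < (p : ℤ) := by omega
  have hkey : (p : ℤ) * B < ((n : ℤ) - 1) * ((p : ℤ) - 1) + ((p : ℤ) - 2 * n) + B := by
    rcases hA with hA | hA <;> rw [hA] at hid <;>
      rcases hcb with ⟨hc1, hc2⟩ | ⟨hc1, hc2⟩ <;>
      nlinarith [hub, hlb, hD.1, hD.2, hid]
  by_contra hcon
  push_neg at hcon
  have hnB : (n : ℤ) ≤ B := by linarith [Int.lt_iff_add_one_le.mp hcon]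
  have hpn : (n : ℤ) < (p : ℤ) := by exact_mod_cast hnp
  have hn' : (2 : ℤ) ≤ (n : ℤ) := by exact_mod_cast hn
  have hmul : ((p : ℤ) - 1) * (n : ℤ) ≤ ((p : ℤ) - 1) * B :=
    mul_le_mul_of_nonneg_left hnB (by omega)
  nlinarith [hkey, hmul]

end LLLSerre
end
end
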